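/- arXiv:1608.01175 — 4 statements merged into one kernel-verified Lean document; each statement's English description precedes it below -/
import Mathlib

section
/- Let U ⊆ ℝ² be open and connected, let E : U → ℝ be a smooth, strictly positive, harmonic function (E_uu + E_vv = 0), and let c ∈ ℝ be a nonzero constant. If 2c²E³ = |∇E|² = (E_u)² + (E_v)² holds identically on U, then we reach a contradiction; i.e., no such E exists. -/
section helpers

variable {U : Set (ℝ × ℝ)} {f g u v : ℝ × ℝ → ℝ} {p q : ℝ × ℝ}

lemma pd_contDiffOn (hU : IsOpen U) (hf : ContDiffOn ℝ (⊤ : ℕ∞) f U) (w : ℝ × ℝ) :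
    ContDiffOn ℝ (⊤ : ℕ∞) (fun q => fderiv ℝ f q w) U := by
  have h1 : ContDiffOn ℝ (⊤ : ℕ∞) (fderivWithin ℝ f U) U :=
    hf.fderivWithin hU.uniqueDiffOn (by simp)
  have h2 : ContDiffOn ℝ (⊤ : ℕ∞) (fderiv ℝ f) U :=
    h1.congr fun x hx => (fderivWithin_of_isOpen hU hx).symm
  exact (ContinuousLinearMap.apply ℝ ℝ w).contDiff.comp_contDiffOn h2

lemma diffAt_of (hU : IsOpen U) (hf : ContDiffOn ℝ (⊤ : ℕ∞) f U) (hp : p ∈ U) :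
    DifferentiableAt ℝ f p :=
  (hf.contDiffAt (hU.mem_nhds hp)).differentiableAt (by simp)

lemma pd_congr (hU : IsOpen U) (h : ∀ q ∈ U, f q = g q) (hp : p ∈ U) (w : ℝ × ℝ) :
    fderiv ℝ f p w = fderiv ℝ g p w := by
  have h' : f =ᶠ[nhds p] g := Filter.eventually_of_mem (hU.mem_nhds hp) h
  rw [h'.fderiv_eq]

lemma pd_add (hf : DifferentiableAt ℝ f p) (hg : DifferentiableAt ℝ g p) (w : ℝ × ℝ) :
    fderiv ℝ (fun q => f q + g q) p w = fderiv ℝ f p w + fderiv ℝ g p w := by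
  rw [fderiv_fun_add hf hg]; simp

lemma pd_mul (hf : DifferentiableAt ℝ f p) (hg : DifferentiableAt ℝ g p) (w : ℝ × ℝ) :
    fderiv ℝ (fun q => f q * g q) p w
      = fderiv ℝ f p w * g p + f p * fderiv ℝ g p w := by
  rw [fderiv_fun_mul hf hg]
  simp [smul_eq_mul]
  ring

lemma pd_const_mul (hf : DifferentiableAt ℝ f p) (a : ℝ) (w : ℝ × ℝ) :
    fderiv ℝ (fun q => a * f q) p w = a * fderiv ℝ f p w := by
  rw [fderiv_const_mul hf a]; simp

lemma pd_sq (hf : DifferentiableAt ℝ f p) (w : ℝ × ℝ) :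
    fderiv ℝ (fun q => (f q)^2) p w = 2 * f p * fderiv ℝ f p w := by
  have h : (fun q => (f q)^2) = fun q => f q * f q := by funext q; ring
  rw [h, pd_mul hf hf]; ring

lemma pd_cube (hf : DifferentiableAt ℝ f p) (w : ℝ × ℝ) :
    fderiv ℝ (fun q => (f q)^3) p w = 3 * (f p)^2 * fderiv ℝ f p w := by
  have h : (fun q => (f q)^3) = fun q => f q * (f q * f q) := by funext q; ring
  rw [h, pd_mul (g := fun q => f q * f q) hf (hf.mul hf), pd_mul hf hf]; ring

lemma pd_amul (a : ℝ) (hu : DifferentiableAt ℝ u q) (hv : DifferentiableAt ℝ v q) (w : ℝ × ℝ) :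
    fderiv ℝ (fun r => a * u r * v r) q w
      = a * fderiv ℝ u q w * v q + a * u q * fderiv ℝ v q w := by
  have h1 := pd_mul (f := fun r => a * u r) ((differentiableAt_const a).mul hu) hv w
  have h2 : fderiv ℝ (fun r => a * u r) q w = a * fderiv ℝ u q w := pd_const_mul hu a w
  rw [h2] at h1
  linarith [h1]

lemma pd_swap (hU : IsOpen U) (hf : ContDiffOn ℝ (⊤ : ℕ∞) f U) (hp : p ∈ U) (v w : ℝ × ℝ) :
    fderiv ℝ (fun q => fderiv ℝ f q v) p w = fderiv ℝ (fun q => fderiv ℝ f q w) p v := by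
  have hfa : ContDiffAt ℝ (⊤ : ℕ∞) f p := hf.contDiffAt (hU.mem_nhds hp)
  have h1 : ContDiffAt ℝ 1 (fderiv ℝ f) p := hfa.fderiv_right (WithTop.coe_le_coe.mpr le_top)
  have hd : DifferentiableAt ℝ (fderiv ℝ f) p := h1.differentiableAt one_ne_zero
  have hsym : IsSymmSndFDerivAt ℝ f p := hfa.isSymmSndFDerivAt (by
    rw [minSmoothness_of_isRCLikeNormedField]; exact (WithTop.coe_le_coe.mpr le_top : ((2:ℕ∞) : WithTop ℕ∞) ≤ ((⊤:ℕ∞) : WithTop ℕ∞)))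
  have key : ∀ u : ℝ × ℝ, fderiv ℝ (fun q => fderiv ℝ f q u) p
      = (ContinuousLinearMap.apply ℝ ℝ u).comp (fderiv ℝ (fderiv ℝ f) p) := by
    intro u
    exact (((ContinuousLinearMap.apply ℝ ℝ u).hasFDerivAt).comp p hd.hasFDerivAt).fderiv
  rw [key v, key w]
  exact hsym w v

end helpers

noncomputable def pdu (f : ℝ × ℝ → ℝ) : ℝ × ℝ → ℝ := fun p => fderiv ℝ f p (1, 0)
noncomputable def pdv (f : ℝ × ℝ → ℝ) : ℝ × ℝ → ℝ := fun p => fderiv ℝ f p (0, 1)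

theorem stmt_3 (U : Set (ℝ × ℝ)) (hU : IsOpen U) (hUc : IsConnected U)
    (E : ℝ × ℝ → ℝ) (hE : ContDiffOn ℝ (⊤ : ℕ∞) E U) (hEpos : ∀ p ∈ U, 0 < E p)
    (hharm : ∀ p ∈ U, pdu (pdu E) p + pdv (pdv E) p = 0)
    (c : ℝ) (hc : c ≠ 0)
    (heq : ∀ p ∈ U, 2 * c^2 * (E p)^3 = (pdu E p)^2 + (pdv E p)^2) :
    False := by
  obtain ⟨p, hp⟩ := hUc.nonempty
  -- smoothness of the derivative functions
  have hA : ContDiffOn ℝ (⊤ : ℕ∞) (pdu E) U := pd_contDiffOn hU hE (1,0)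
  have hB : ContDiffOn ℝ (⊤ : ℕ∞) (pdv E) U := pd_contDiffOn hU hE (0,1)
  have hAu : ContDiffOn ℝ (⊤ : ℕ∞) (fun q => fderiv ℝ (pdu E) q (1,0)) U := pd_contDiffOn hU hA (1,0)
  have hAv : ContDiffOn ℝ (⊤ : ℕ∞) (fun q => fderiv ℝ (pdu E) q (0,1)) U := pd_contDiffOn hU hA (0,1)
  have hBu : ContDiffOn ℝ (⊤ : ℕ∞) (fun q => fderiv ℝ (pdv E) q (1,0)) U := pd_contDiffOn hU hB (1,0)
  have hBv : ContDiffOn ℝ (⊤ : ℕ∞) (fun q => fderiv ℝ (pdv E) q (0,1)) U := pd_contDiffOn hU hB (0,1)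
  -- pointwise differentiability
  have dE : ∀ q ∈ U, DifferentiableAt ℝ E q := fun q hq => diffAt_of hU hE hq
  have dA : ∀ q ∈ U, DifferentiableAt ℝ (pdu E) q := fun q hq => diffAt_of hU hA hq
  have dB : ∀ q ∈ U, DifferentiableAt ℝ (pdv E) q := fun q hq => diffAt_of hU hB hq
  have dAu : ∀ q ∈ U, DifferentiableAt ℝ (fun r => fderiv ℝ (pdu E) r (1,0)) q :=
    fun q hq => diffAt_of hU hAu hq
  have dAv : ∀ q ∈ U, DifferentiableAt ℝ (fun r => fderiv ℝ (pdu E) r (0,1)) q :=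
    fun q hq => diffAt_of hU hAv hq
  have dBu : ∀ q ∈ U, DifferentiableAt ℝ (fun r => fderiv ℝ (pdv E) r (1,0)) q :=
    fun q hq => diffAt_of hU hBu hq
  have dBv : ∀ q ∈ U, DifferentiableAt ℝ (fun r => fderiv ℝ (pdv E) r (0,1)) q :=
    fun q hq => diffAt_of hU hBv hq
  -- harmonicity in fderiv form
  have hharm' : ∀ q ∈ U, fderiv ℝ (pdu E) q ((1:ℝ),(0:ℝ)) + fderiv ℝ (pdv E) q ((0:ℝ),(1:ℝ)) = 0 :=
    fun q hq => hharm q hq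
  -- Schwarz symmetry on U
  have schwarz : ∀ q ∈ U, fderiv ℝ (pdv E) q ((1:ℝ),(0:ℝ)) = fderiv ℝ (pdu E) q ((0:ℝ),(1:ℝ)) :=
    fun q hq => pd_swap hU hE hq (0,1) (1,0)
  -- first differentiation of the main identity, any direction
  have Du : ∀ q ∈ U, ∀ w : ℝ × ℝ, 6*c^2*(E q)^2*(fderiv ℝ E q w)
      = 2*(pdu E q)*(fderiv ℝ (pdu E) q w) + 2*(pdv E q)*(fderiv ℝ (pdv E) q w) := by
    intro q hq w
    have h := pd_congr (f := fun r => 2*c^2*(E r)^3)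
      (g := fun r => (pdu E r)^2 + (pdv E r)^2) hU heq hq w
    have hL1 : fderiv ℝ (fun r => 2*c^2*(E r)^3) q w
        = (2*c^2) * fderiv ℝ (fun r => (E r)^3) q w := pd_const_mul ((dE q hq).pow 3) (2*c^2) w
    have hL2 : fderiv ℝ (fun r => (E r)^3) q w = 3*(E q)^2*(fderiv ℝ E q w) := pd_cube (dE q hq) w
    have hR0 : fderiv ℝ (fun r => (pdu E r)^2 + (pdv E r)^2) q w
        = fderiv ℝ (fun r => (pdu E r)^2) q w + fderiv ℝ (fun r => (pdv E r)^2) q w :=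
      pd_add ((dA q hq).pow 2) ((dB q hq).pow 2) w
    have hR1 : fderiv ℝ (fun r => (pdu E r)^2) q w = 2*(pdu E q)*(fderiv ℝ (pdu E) q w) :=
      pd_sq (dA q hq) w
    have hR2 : fderiv ℝ (fun r => (pdv E r)^2) q w = 2*(pdv E q)*(fderiv ℝ (pdv E) q w) :=
      pd_sq (dB q hq) w
    rw [hL1, hL2, hR0, hR1, hR2] at h
    linarith [h]
  -- the two first-order identities as functions on U
  have Du1 : ∀ q ∈ U, 6*c^2*(E q)^2*(pdu E q)
      = 2*(pdu E q)*(fderiv ℝ (pdu E) q ((1:ℝ),(0:ℝ))) + 2*(pdv E q)*(fderiv ℝ (pdv E) q ((1:ℝ),(0:ℝ))) :=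
    fun q hq => Du q hq (1,0)
  have Dv1 : ∀ q ∈ U, 6*c^2*(E q)^2*(pdv E q)
      = 2*(pdu E q)*(fderiv ℝ (pdu E) q ((0:ℝ),(1:ℝ))) + 2*(pdv E q)*(fderiv ℝ (pdv E) q ((0:ℝ),(1:ℝ))) :=
    fun q hq => Du q hq (0,1)
  -- second differentiation: direction (1,0) of Du1 at p
  have cEu : fderiv ℝ E p ((1:ℝ),(0:ℝ)) = pdu E p := rfl
  have cEv : fderiv ℝ E p ((0:ℝ),(1:ℝ)) = pdv E p := rfl
  have eq_u : 6*c^2*(2*(E p)*(pdu E p))*(pdu E p) + 6*c^2*(E p)^2*(fderiv ℝ (pdu E) p ((1:ℝ),(0:ℝ)))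
      = 2*(fderiv ℝ (pdu E) p ((1:ℝ),(0:ℝ)))*(fderiv ℝ (pdu E) p ((1:ℝ),(0:ℝ)))
        + 2*(pdu E p)*(fderiv ℝ (fun r => fderiv ℝ (pdu E) r (1,0)) p ((1:ℝ),(0:ℝ)))
        + 2*(fderiv ℝ (pdv E) p ((1:ℝ),(0:ℝ)))*(fderiv ℝ (pdv E) p ((1:ℝ),(0:ℝ)))
        + 2*(pdv E p)*(fderiv ℝ (fun r => fderiv ℝ (pdv E) r (1,0)) p ((1:ℝ),(0:ℝ))) := by
    have h := pd_congr (f := fun r => 6*c^2*(E r)^2*(pdu E r))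
      (g := fun r => 2*(pdu E r)*(fderiv ℝ (pdu E) r (1,0)) + 2*(pdv E r)*(fderiv ℝ (pdv E) r (1,0)))
      hU Du1 hp (1,0)
    have hL := pd_amul (u := fun r => (E r)^2) (v := pdu E) (6*c^2)
      ((dE p hp).pow 2) (dA p hp) (1,0)
    rw [pd_sq (dE p hp) ((1:ℝ),(0:ℝ)), cEu] at hL
    have hR0 := pd_add (f := fun r => 2*(pdu E r)*(fderiv ℝ (pdu E) r (1,0)))
      (g := fun r => 2*(pdv E r)*(fderiv ℝ (pdv E) r (1,0)))
      (((differentiableAt_const (2:ℝ)).mul (dA p hp)).mul (dAu p hp))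
      (((differentiableAt_const (2:ℝ)).mul (dB p hp)).mul (dBu p hp)) (1,0)
    have hRa := pd_amul (u := pdu E) (v := fun r => fderiv ℝ (pdu E) r (1,0)) 2
      (dA p hp) (dAu p hp) (1,0)
    have hRb := pd_amul (u := pdv E) (v := fun r => fderiv ℝ (pdv E) r (1,0)) 2
      (dB p hp) (dBu p hp) (1,0)
    rw [hL, hR0, hRa, hRb] at h
    linarith [h]
  -- second differentiation: direction (0,1) of Dv1 at p
  have eq_v : 6*c^2*(2*(E p)*(pdv E p))*(pdv E p) + 6*c^2*(E p)^2*(fderiv ℝ (pdv E) p ((0:ℝ),(1:ℝ)))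
      = 2*(fderiv ℝ (pdu E) p ((0:ℝ),(1:ℝ)))*(fderiv ℝ (pdu E) p ((0:ℝ),(1:ℝ)))
        + 2*(pdu E p)*(fderiv ℝ (fun r => fderiv ℝ (pdu E) r (0,1)) p ((0:ℝ),(1:ℝ)))
        + 2*(fderiv ℝ (pdv E) p ((0:ℝ),(1:ℝ)))*(fderiv ℝ (pdv E) p ((0:ℝ),(1:ℝ)))
        + 2*(pdv E p)*(fderiv ℝ (fun r => fderiv ℝ (pdv E) r (0,1)) p ((0:ℝ),(1:ℝ))) := by
    have h := pd_congr (f := fun r => 6*c^2*(E r)^2*(pdv E r))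
      (g := fun r => 2*(pdu E r)*(fderiv ℝ (pdu E) r (0,1)) + 2*(pdv E r)*(fderiv ℝ (pdv E) r (0,1)))
      hU Dv1 hp (0,1)
    have hL := pd_amul (u := fun r => (E r)^2) (v := pdv E) (6*c^2)
      ((dE p hp).pow 2) (dB p hp) (0,1)
    rw [pd_sq (dE p hp) ((0:ℝ),(1:ℝ)), cEv] at hL
    have hR0 := pd_add (f := fun r => 2*(pdu E r)*(fderiv ℝ (pdu E) r (0,1)))
      (g := fun r => 2*(pdv E r)*(fderiv ℝ (pdv E) r (0,1)))
      (((differentiableAt_const (2:ℝ)).mul (dA p hp)).mul (dAv p hp))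
      (((differentiableAt_const (2:ℝ)).mul (dB p hp)).mul (dBv p hp)) (0,1)
    have hRa := pd_amul (u := pdu E) (v := fun r => fderiv ℝ (pdu E) r (0,1)) 2
      (dA p hp) (dAv p hp) (0,1)
    have hRb := pd_amul (u := pdv E) (v := fun r => fderiv ℝ (pdv E) r (0,1)) 2
      (dB p hp) (dBv p hp) (0,1)
    rw [hL, hR0, hRa, hRb] at h
    linarith [h]
  -- derivative of the harmonicity identity
  have harm_d : ∀ w : ℝ × ℝ, fderiv ℝ (fun r => fderiv ℝ (pdu E) r (1,0)) p w
      + fderiv ℝ (fun r => fderiv ℝ (pdv E) r (0,1)) p w = 0 := by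
    intro w
    have h := pd_congr (f := fun r => fderiv ℝ (pdu E) r (1,0) + fderiv ℝ (pdv E) r (0,1))
      (g := fun _ => (0:ℝ)) hU hharm' hp w
    have h0 : fderiv ℝ (fun _ : ℝ × ℝ => (0:ℝ)) p w = 0 := by simp
    have hadd := pd_add (f := fun r => fderiv ℝ (pdu E) r (1,0))
      (g := fun r => fderiv ℝ (pdv E) r (0,1)) (dAu p hp) (dBv p hp) w
    rw [hadd, h0] at h
    exact h
  -- third-order swaps
  have sw1 : fderiv ℝ (fun r => fderiv ℝ (pdv E) r (0,1)) p ((1:ℝ),(0:ℝ))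
      = fderiv ℝ (fun r => fderiv ℝ (pdv E) r (1,0)) p ((0:ℝ),(1:ℝ)) :=
    pd_swap hU hB hp (0,1) (1,0)
  have sw2 : fderiv ℝ (fun r => fderiv ℝ (pdv E) r (1,0)) p ((0:ℝ),(1:ℝ))
      = fderiv ℝ (fun r => fderiv ℝ (pdu E) r (0,1)) p ((0:ℝ),(1:ℝ)) :=
    pd_congr hU schwarz hp (0,1)
  have sw3 : fderiv ℝ (fun r => fderiv ℝ (pdu E) r (1,0)) p ((0:ℝ),(1:ℝ))
      = fderiv ℝ (fun r => fderiv ℝ (pdu E) r (0,1)) p ((1:ℝ),(0:ℝ)) :=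
    pd_swap hU hA hp (1,0) (0,1)
  have sw4 : fderiv ℝ (fun r => fderiv ℝ (pdu E) r (0,1)) p ((1:ℝ),(0:ℝ))
      = fderiv ℝ (fun r => fderiv ℝ (pdv E) r (1,0)) p ((1:ℝ),(0:ℝ)) :=
    pd_congr hU (fun q hq => (schwarz q hq).symm) hp (1,0)
  -- T1 + T3 = 0
  have hT13 : fderiv ℝ (fun r => fderiv ℝ (pdu E) r (1,0)) p ((1:ℝ),(0:ℝ))
      + fderiv ℝ (fun r => fderiv ℝ (pdu E) r (0,1)) p ((0:ℝ),(1:ℝ)) = 0 := by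
    have h := harm_d (1,0)
    rw [sw1, sw2] at h
    exact h
  -- T2 + T4 = 0
  have hT24 : fderiv ℝ (fun r => fderiv ℝ (pdv E) r (1,0)) p ((1:ℝ),(0:ℝ))
      + fderiv ℝ (fun r => fderiv ℝ (pdv E) r (0,1)) p ((0:ℝ),(1:ℝ)) = 0 := by
    have h := harm_d (0,1)
    rw [sw3, sw4] at h
    exact h
  -- endgame: pure algebra at p
  have heqp := heq p hp
  have hDu := Du1 p hp
  have hDv := Dv1 p hp
  have hQ := schwarz p hp
  have hPR := hharm' p hp
  have hEp := hEpos p hp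
  set a := pdu E p with ha
  set b := pdv E p with hb
  set P := fderiv ℝ (pdu E) p ((1:ℝ),(0:ℝ)) with hP
  set Q := fderiv ℝ (pdu E) p ((0:ℝ),(1:ℝ)) with hQdef
  set Q2 := fderiv ℝ (pdv E) p ((1:ℝ),(0:ℝ)) with hQ2
  set R := fderiv ℝ (pdv E) p ((0:ℝ),(1:ℝ)) with hR
  set T1 := fderiv ℝ (fun r => fderiv ℝ (pdu E) r (1,0)) p ((1:ℝ),(0:ℝ)) with hT1
  set T2 := fderiv ℝ (fun r => fderiv ℝ (pdv E) r (1,0)) p ((1:ℝ),(0:ℝ)) with hT2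
  set T3 := fderiv ℝ (fun r => fderiv ℝ (pdu E) r (0,1)) p ((0:ℝ),(1:ℝ)) with hT3
  set T4 := fderiv ℝ (fun r => fderiv ℝ (pdv E) r (0,1)) p ((0:ℝ),(1:ℝ)) with hT4
  -- substitutions
  rw [hQ] at hDu eq_u
  have hR' : R = -P := by linarith
  rw [hR'] at hDv eq_v
  have hT3' : T3 = -T1 := by linarith
  have hT4' : T4 = -T2 := by linarith
  rw [hT3', hT4'] at eq_v
  have hsum2 : P^2 + Q^2 = 6*c^4*(E p)^4 := by
    linear_combination (-(1/4:ℝ))*eq_u - (1/4:ℝ)*eq_v - 3*c^2*(E p)*heqp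
  have hsq : 36*c^4*(E p)^4*(a^2+b^2) = 4*(a^2+b^2)*(P^2+Q^2) := by
    linear_combination (6*c^2*(E p)^2*a + 2*a*P + 2*b*Q)*hDu
      + (6*c^2*(E p)^2*b + 2*a*Q - 2*b*P)*hDv
  have hfin : 24*c^6*(E p)^7 = 0 := by
    linear_combination hsq + 4*(a^2+b^2)*hsum2 + 12*c^4*(E p)^4*heqp
  have hpos : 0 < 24*c^6*(E p)^7 := by positivity
  linarith
end

section
/- Let U ⊆ ℝ² be open and connected, let E : U → ℝ be smooth, strictly positive, and harmonic, and let e : U → ℝ be smooth. Suppose the Gauss–Codazzi system holds on U: (i) e_u = (E_u/E)·e, (ii) e_v = (E_v/E)·e, (iii) e² = (1/2)·((E_u)² + (E_v)²)/E. Then e ≡ 0 on U and E is constant. -/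
open Filter Topology

section helpers
variable {f g : ℝ × ℝ → ℝ} {x : ℝ × ℝ} {U : Set (ℝ × ℝ)}

lemma fd_congrU (hU : IsOpen U) (h : ∀ y ∈ U, f y = g y) (hx : x ∈ U) (w : ℝ × ℝ) :
    fderiv ℝ f x w = fderiv ℝ g x w := by
  rw [Filter.EventuallyEq.fderiv_eq (Filter.eventuallyEq_of_mem (hU.mem_nhds hx) h)]

lemma fd_mul (hf : DifferentiableAt ℝ f x) (hg : DifferentiableAt ℝ g x) (w : ℝ × ℝ) :
    fderiv ℝ (fun y => f y * g y) x w = f x * fderiv ℝ g x w + g x * fderiv ℝ f x w := by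
  rw [fderiv_fun_mul hf hg]; simp [smul_eq_mul]

lemma fd_add (hf : DifferentiableAt ℝ f x) (hg : DifferentiableAt ℝ g x) (w : ℝ × ℝ) :
    fderiv ℝ (fun y => f y + g y) x w = fderiv ℝ f x w + fderiv ℝ g x w := by
  rw [fderiv_fun_add hf hg]; simp

lemma fd_sub (hf : DifferentiableAt ℝ f x) (hg : DifferentiableAt ℝ g x) (w : ℝ × ℝ) :
    fderiv ℝ (fun y => f y - g y) x w = fderiv ℝ f x w - fderiv ℝ g x w := by
  rw [fderiv_fun_sub hf hg]; simp

lemma fd_const_mul (c : ℝ) (hf : DifferentiableAt ℝ f x) (w : ℝ × ℝ) :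
    fderiv ℝ (fun y => c * f y) x w = c * fderiv ℝ f x w := by
  rw [fderiv_const_mul hf]; simp

lemma contDiffAt_fd (hf : ContDiffAt ℝ (⊤ : ℕ∞) f x) (w : ℝ × ℝ) :
    ContDiffAt ℝ (⊤ : ℕ∞) (fun y => fderiv ℝ f y w) x := by
  have h1 : ContDiffAt ℝ (⊤ : ℕ∞) (fderiv ℝ f) x := hf.fderiv_right (by simp)
  exact (ContinuousLinearMap.apply ℝ ℝ w).contDiff.comp_contDiffAt x h1

lemma contDiffOn_fd (hU : IsOpen U) (hf : ContDiffOn ℝ (⊤ : ℕ∞) f U) (w : ℝ × ℝ) :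
    ContDiffOn ℝ (⊤ : ℕ∞) (fun y => fderiv ℝ f y w) U :=
  fun x hx => (contDiffAt_fd (hf.contDiffAt (hU.mem_nhds hx)) w).contDiffWithinAt

lemma fd_symm (hU : IsOpen U) (hf : ContDiffOn ℝ (⊤ : ℕ∞) f U) (hx : x ∈ U) :
    fderiv ℝ (fun y => fderiv ℝ f y (1, 0)) x (0, 1) =
      fderiv ℝ (fun y => fderiv ℝ f y (0, 1)) x (1, 0) := by
  have hev : ∀ᶠ y in 𝓝 x, HasFDerivAt f (fderiv ℝ f y) y := by
    filter_upwards [hU.mem_nhds hx] with y hy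
    exact ((hf.contDiffAt (hU.mem_nhds hy)).differentiableAt (by simp)).hasFDerivAt
  have hd : DifferentiableAt ℝ (fderiv ℝ f) x :=
    ((hf.contDiffAt (hU.mem_nhds hx)).fderiv_right (m := (⊤ : ℕ∞)) (by simp)).differentiableAt (by simp)
  have hsymm := second_derivative_symmetric_of_eventually hev hd.hasFDerivAt
    ((0 : ℝ), (1 : ℝ)) ((1 : ℝ), (0 : ℝ))
  have h10 : fderiv ℝ (fun y => fderiv ℝ f y (1, 0)) x =
      (ContinuousLinearMap.apply ℝ ℝ ((1 : ℝ), (0 : ℝ))).comp (fderiv ℝ (fderiv ℝ f) x) :=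
    ((ContinuousLinearMap.apply ℝ ℝ ((1 : ℝ), (0 : ℝ))).hasFDerivAt.comp x hd.hasFDerivAt).fderiv
  have h01 : fderiv ℝ (fun y => fderiv ℝ f y (0, 1)) x =
      (ContinuousLinearMap.apply ℝ ℝ ((0 : ℝ), (1 : ℝ))).comp (fderiv ℝ (fderiv ℝ f) x) :=
    ((ContinuousLinearMap.apply ℝ ℝ ((0 : ℝ), (1 : ℝ))).hasFDerivAt.comp x hd.hasFDerivAt).fderiv
  rw [h10, h01]
  simpa using hsymm

end helpers

theorem stmt_7 (U : Set (ℝ × ℝ)) (hU : IsOpen U) (hUc : IsConnected U)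
    (E e : ℝ × ℝ → ℝ) (hE : ContDiffOn ℝ (⊤ : ℕ∞) E U) (he : ContDiffOn ℝ (⊤ : ℕ∞) e U)
    (hEpos : ∀ p ∈ U, 0 < E p)
    (hharm : ∀ p ∈ U, pdu (pdu E) p + pdv (pdv E) p = 0)
    (h1 : ∀ p ∈ U, pdu e p = (pdu E p / E p) * e p)
    (h2 : ∀ p ∈ U, pdv e p = (pdv E p / E p) * e p)
    (h3 : ∀ p ∈ U, (e p)^2 = (1/2) * ((pdu E p)^2 + (pdv E p)^2) / E p) :
    (∀ p ∈ U, e p = 0) ∧ ∃ k : ℝ, ∀ p ∈ U, E p = k := by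
  -- restate everything in raw fderiv form
  have h1' : ∀ p ∈ U, fderiv ℝ e p (1, 0) = (fderiv ℝ E p (1, 0) / E p) * e p := h1
  have h2' : ∀ p ∈ U, fderiv ℝ e p (0, 1) = (fderiv ℝ E p (0, 1) / E p) * e p := h2
  have h3' : ∀ p ∈ U, (e p) ^ 2 =
      (1/2) * ((fderiv ℝ E p (1, 0)) ^ 2 + (fderiv ℝ E p (0, 1)) ^ 2) / E p := h3
  have hharm' : ∀ p ∈ U,
      fderiv ℝ (fun y => fderiv ℝ E y (1, 0)) p (1, 0) +
        fderiv ℝ (fun y => fderiv ℝ E y (0, 1)) p (0, 1) = 0 := hharm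
  have hEne : ∀ p ∈ U, E p ≠ 0 := fun p hp => (hEpos p hp).ne'
  have hcE : ∀ x ∈ U, ContDiffAt ℝ (⊤ : ℕ∞) E x := fun x hx => hE.contDiffAt (hU.mem_nhds hx)
  have hdE : ∀ x ∈ U, DifferentiableAt ℝ E x := fun x hx => (hcE x hx).differentiableAt (by simp)
  have hde : ∀ x ∈ U, DifferentiableAt ℝ e x := fun x hx =>
    ((he.contDiffAt (hU.mem_nhds hx))).differentiableAt (by simp)
  have hda : ∀ x ∈ U, DifferentiableAt ℝ (fun y => fderiv ℝ E y (1, 0)) x := fun x hx =>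
    (contDiffAt_fd (hcE x hx) _).differentiableAt (by simp)
  have hdb : ∀ x ∈ U, DifferentiableAt ℝ (fun y => fderiv ℝ E y (0, 1)) x := fun x hx =>
    (contDiffAt_fd (hcE x hx) _).differentiableAt (by simp)
  have hdP : ∀ x ∈ U,
      DifferentiableAt ℝ (fun y => fderiv ℝ (fun z => fderiv ℝ E z (1, 0)) y (1, 0)) x :=
    fun x hx => (contDiffAt_fd (contDiffAt_fd (hcE x hx) _) _).differentiableAt (by simp)
  have hdQ : ∀ x ∈ U,
      DifferentiableAt ℝ (fun y => fderiv ℝ (fun z => fderiv ℝ E z (0, 1)) y (1, 0)) x :=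
    fun x hx => (contDiffAt_fd (contDiffAt_fd (hcE x hx) _) _).differentiableAt (by simp)
  have hsymE : ∀ p ∈ U, fderiv ℝ (fun y => fderiv ℝ E y (1, 0)) p (0, 1) =
      fderiv ℝ (fun y => fderiv ℝ E y (0, 1)) p (1, 0) := fun p hp => fd_symm hU hE hp
  -- I3 : cleared-denominator form of h3
  have I3 : ∀ y ∈ U, 2 * E y * (e y * e y) =
      fderiv ℝ E y (1, 0) * fderiv ℝ E y (1, 0) + fderiv ℝ E y (0, 1) * fderiv ℝ E y (0, 1) := by
    intro y hy
    have h := h3' y hy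
    field_simp [hEne y hy] at h
    linear_combination h
  -- derivative of I3 in the u direction
  have hA : ∀ x ∈ U, 3 * fderiv ℝ E x (1, 0) *
        (fderiv ℝ E x (1, 0) * fderiv ℝ E x (1, 0) + fderiv ℝ E x (0, 1) * fderiv ℝ E x (0, 1)) =
      E x * (2 * fderiv ℝ E x (1, 0) * fderiv ℝ (fun y => fderiv ℝ E y (1, 0)) x (1, 0) +
        2 * fderiv ℝ E x (0, 1) * fderiv ℝ (fun y => fderiv ℝ E y (0, 1)) x (1, 0)) := by
    intro x hx
    have key := fd_congrU hU I3 hx ((1 : ℝ), (0 : ℝ))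
    rw [fd_mul ((hdE x hx).const_mul 2) ((hde x hx).fun_mul (hde x hx)),
        fd_mul (hde x hx) (hde x hx), fd_const_mul 2 (hdE x hx),
        fd_add ((hda x hx).fun_mul (hda x hx)) ((hdb x hx).fun_mul (hdb x hx)),
        fd_mul (hda x hx) (hda x hx), fd_mul (hdb x hx) (hdb x hx)] at key
    have hm : E x * fderiv ℝ e x (1, 0) = fderiv ℝ E x (1, 0) * e x := by
      rw [h1' x hx]; field_simp [hEne x hx]
    have i := I3 x hx
    linear_combination (E x) * key - (4 * E x * e x) * hm - (3 * fderiv ℝ E x (1, 0)) * i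
  -- derivative of I3 in the v direction
  have hB : ∀ x ∈ U, 3 * fderiv ℝ E x (0, 1) *
        (fderiv ℝ E x (1, 0) * fderiv ℝ E x (1, 0) + fderiv ℝ E x (0, 1) * fderiv ℝ E x (0, 1)) =
      E x * (2 * fderiv ℝ E x (1, 0) * fderiv ℝ (fun y => fderiv ℝ E y (0, 1)) x (1, 0) -
        2 * fderiv ℝ E x (0, 1) * fderiv ℝ (fun y => fderiv ℝ E y (1, 0)) x (1, 0)) := by
    intro x hx
    have key := fd_congrU hU I3 hx ((0 : ℝ), (1 : ℝ))
    rw [fd_mul ((hdE x hx).const_mul 2) ((hde x hx).fun_mul (hde x hx)),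
        fd_mul (hde x hx) (hde x hx), fd_const_mul 2 (hdE x hx),
        fd_add ((hda x hx).fun_mul (hda x hx)) ((hdb x hx).fun_mul (hdb x hx)),
        fd_mul (hda x hx) (hda x hx), fd_mul (hdb x hx) (hdb x hx)] at key
    have hm : E x * fderiv ℝ e x (0, 1) = fderiv ℝ E x (0, 1) * e x := by
      rw [h2' x hx]; field_simp [hEne x hx]
    have i := I3 x hx
    have hs := hsymE x hx
    have hh := hharm' x hx
    linear_combination (E x) * key - (4 * E x * e x) * hm - (3 * fderiv ℝ E x (0, 1)) * i +
      (2 * E x * fderiv ℝ E x (1, 0)) * hs +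
      (2 * E x * fderiv ℝ E x (0, 1)) * hh
  -- the set where the gradient of E is nonzero
  set V : Set (ℝ × ℝ) :=
    {x | x ∈ U ∧ (fderiv ℝ E x (1, 0) ≠ 0 ∨ fderiv ℝ E x (0, 1) ≠ 0)} with hVdef
  have hVU : ∀ x ∈ V, x ∈ U := fun x hx => hx.1
  have hVopen : IsOpen V := by
    rw [isOpen_iff_mem_nhds]
    rintro x ⟨hxU, hor⟩
    rcases hor with h | h
    · have hc : ContinuousAt (fun y => fderiv ℝ E y (1, 0)) x :=
        (contDiffAt_fd (hcE x hxU) _).continuousAt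
      filter_upwards [hU.mem_nhds hxU, hc.eventually_ne h] with y hyU hyne
      exact ⟨hyU, Or.inl hyne⟩
    · have hc : ContinuousAt (fun y => fderiv ℝ E y (0, 1)) x :=
        (contDiffAt_fd (hcE x hxU) _).continuousAt
      filter_upwards [hU.mem_nhds hxU, hc.eventually_ne h] with y hyU hyne
      exact ⟨hyU, Or.inr hyne⟩
  have hsum_ne : ∀ x ∈ V,
      fderiv ℝ E x (1, 0) * fderiv ℝ E x (1, 0) +
        fderiv ℝ E x (0, 1) * fderiv ℝ E x (0, 1) ≠ 0 := by
    rintro x ⟨hxU, hor⟩ h0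
    have hA2 : fderiv ℝ E x (1, 0) * fderiv ℝ E x (1, 0) = 0 := by
      nlinarith [mul_self_nonneg (fderiv ℝ E x (1, 0)), mul_self_nonneg (fderiv ℝ E x (0, 1))]
    have hB2 : fderiv ℝ E x (0, 1) * fderiv ℝ E x (0, 1) = 0 := by
      nlinarith [mul_self_nonneg (fderiv ℝ E x (1, 0)), mul_self_nonneg (fderiv ℝ E x (0, 1))]
    rcases hor with h | h
    · exact h (mul_self_eq_zero.1 hA2)
    · exact h (mul_self_eq_zero.1 hB2)
  -- on V we can solve for the second derivatives
  have hC : ∀ y ∈ V, E y * (2 * fderiv ℝ (fun z => fderiv ℝ E z (1, 0)) y (1, 0)) =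
      3 * (fderiv ℝ E y (1, 0) * fderiv ℝ E y (1, 0) -
        fderiv ℝ E y (0, 1) * fderiv ℝ E y (0, 1)) := by
    intro y hy
    refine mul_left_cancel₀ (hsum_ne y hy) ?_
    linear_combination (fderiv ℝ E y (0, 1)) * hB y (hVU y hy) -
      (fderiv ℝ E y (1, 0)) * hA y (hVU y hy)
  have hD : ∀ y ∈ V, E y * fderiv ℝ (fun z => fderiv ℝ E z (0, 1)) y (1, 0) =
      3 * (fderiv ℝ E y (1, 0) * fderiv ℝ E y (0, 1)) := by
    intro y hy
    refine mul_left_cancel₀ (hsum_ne y hy) ?_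
    linear_combination (-(1/2) * fderiv ℝ E y (0, 1)) * hA y (hVU y hy) -
      ((1/2) * fderiv ℝ E y (1, 0)) * hB y (hVU y hy)
  -- on V the v-derivative of E vanishes
  have hBzero : ∀ x ∈ V, fderiv ℝ E x (0, 1) = 0 := by
    intro x hxV
    have hxU := hVU x hxV
    have keyC := fd_congrU hVopen hC hxV ((0 : ℝ), (1 : ℝ))
    rw [fd_mul (hdE x hxU) ((hdP x hxU).const_mul 2), fd_const_mul 2 (hdP x hxU),
        fd_const_mul 3 (((hda x hxU).fun_mul (hda x hxU)).fun_sub ((hdb x hxU).fun_mul (hdb x hxU))),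
        fd_sub ((hda x hxU).fun_mul (hda x hxU)) ((hdb x hxU).fun_mul (hdb x hxU)),
        fd_mul (hda x hxU) (hda x hxU), fd_mul (hdb x hxU) (hdb x hxU)] at keyC
    have keyD := fd_congrU hVopen hD hxV ((1 : ℝ), (0 : ℝ))
    rw [fd_mul (hdE x hxU) (hdQ x hxU),
        fd_const_mul 3 ((hda x hxU).fun_mul (hdb x hxU)),
        fd_mul (hda x hxU) (hdb x hxU)] at keyD
    have t1 : fderiv ℝ (fun y => fderiv ℝ (fun z => fderiv ℝ E z (0, 1)) y (1, 0)) x (1, 0) =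
        fderiv ℝ (fun y => fderiv ℝ (fun z => fderiv ℝ E z (1, 0)) y (0, 1)) x (1, 0) :=
      fd_congrU hU (fun y hy => (hsymE y hy).symm) hxU _
    have t2 : fderiv ℝ (fun y => fderiv ℝ (fun z => fderiv ℝ E z (1, 0)) y (0, 1)) x (1, 0) =
        fderiv ℝ (fun y => fderiv ℝ (fun z => fderiv ℝ E z (1, 0)) y (1, 0)) x (0, 1) :=
      (fd_symm hU (contDiffOn_fd hU hE ((1 : ℝ), (0 : ℝ))) hxU).symm
    have hS := t1.trans t2
    have h5 : fderiv ℝ (fun z => fderiv ℝ E z (1, 0)) x (1, 0) * fderiv ℝ E x (0, 1) =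
        fderiv ℝ E x (1, 0) * fderiv ℝ (fun z => fderiv ℝ E z (0, 1)) x (1, 0) := by
      linear_combination (1/2 : ℝ) * keyC - keyD + E x * hS +
        3 * fderiv ℝ E x (1, 0) * (hsymE x hxU) - 3 * fderiv ℝ E x (0, 1) * (hharm' x hxU)
    have hB6 : fderiv ℝ E x (0, 1) * (fderiv ℝ E x (1, 0) * fderiv ℝ E x (1, 0) +
        fderiv ℝ E x (0, 1) * fderiv ℝ E x (0, 1)) = 0 := by
      linear_combination (1/3 : ℝ) * fderiv ℝ E x (0, 1) * (hC x hxV) -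
        (2/3 : ℝ) * E x * h5 - (2/3 : ℝ) * fderiv ℝ E x (1, 0) * (hD x hxV)
    exact (mul_eq_zero.1 hB6).resolve_right (hsum_ne x hxV)
  -- hence V is empty
  have hVfalse : ∀ x, x ∉ V := by
    intro x hxV
    obtain ⟨hxU, hor⟩ := hxV
    have hxV' : x ∈ V := ⟨hxU, hor⟩
    have hB0 : ∀ y ∈ V, (fun z => fderiv ℝ E z (0, 1)) y = (fun _ => (0 : ℝ)) y :=
      fun y hy => hBzero y hy
    have hR0 : fderiv ℝ (fun z => fderiv ℝ E z (0, 1)) x (0, 1) = 0 := by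
      rw [fd_congrU hVopen hB0 hxV' ((0 : ℝ), (1 : ℝ))]; simp
    have hP0 : fderiv ℝ (fun z => fderiv ℝ E z (1, 0)) x (1, 0) = 0 := by
      have := hharm' x hxU; linarith
    have hCx := hC x hxV'
    have hBx := hBzero x hxV'
    rw [hP0, hBx] at hCx
    have hA0 : fderiv ℝ E x (1, 0) = 0 := by
      have h : fderiv ℝ E x (1, 0) * fderiv ℝ E x (1, 0) = 0 := by linarith
      exact mul_self_eq_zero.1 h
    rcases hor with h | h
    · exact h hA0
    · exact h hBx
  have hgrad : ∀ p ∈ U, fderiv ℝ E p (1, 0) = 0 ∧ fderiv ℝ E p (0, 1) = 0 := by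
    intro p hp
    constructor
    · by_contra h; exact hVfalse p ⟨hp, Or.inl h⟩
    · by_contra h; exact hVfalse p ⟨hp, Or.inr h⟩
  -- e vanishes
  have he0 : ∀ p ∈ U, e p = 0 := by
    intro p hp
    have h := h3' p hp
    rw [(hgrad p hp).1, (hgrad p hp).2] at h
    have h2 : e p ^ 2 = 0 := by
      rw [h]; ring
    exact (pow_eq_zero_iff two_ne_zero).1 h2
  -- the full derivative of E vanishes
  have hf0 : ∀ z ∈ U, fderiv ℝ E z = 0 := by
    intro z hz
    refine ContinuousLinearMap.ext fun v => ?_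
    have hv : v = v.1 • ((1 : ℝ), (0 : ℝ)) + v.2 • ((0 : ℝ), (1 : ℝ)) := by
      ext <;> simp
    conv_lhs => rw [hv]
    rw [map_add, map_smul, map_smul, (hgrad z hz).1, (hgrad z hz).2]
    simp
  -- E is locally constant
  have hloc : ∀ z ∈ U, ∀ᶠ y in 𝓝 z, E y = E z := by
    intro z hz
    obtain ⟨r, hr, hball⟩ := Metric.isOpen_iff.1 hU z hz
    have hconst : ∀ y ∈ Metric.ball z r, E y = E z := by
      intro y hy
      refine (convex_ball z r).is_const_of_fderivWithin_eq_zero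
        ((hE.mono hball).differentiableOn (by simp)) ?_ hy (Metric.mem_ball_self hr)
      intro w hw
      rw [fderivWithin_of_isOpen Metric.isOpen_ball hw]
      exact hf0 w (hball hw)
    exact Filter.eventually_iff_exists_mem.2 ⟨Metric.ball z r, Metric.ball_mem_nhds z hr, hconst⟩
  obtain ⟨x₀, hx₀⟩ := hUc.nonempty
  refine ⟨he0, E x₀, ?_⟩
  intro p hp
  by_contra hne
  have hopen1 : IsOpen {y | y ∈ U ∧ E y = E x₀} := by
    rw [isOpen_iff_mem_nhds]
    rintro y ⟨hyU, hyE⟩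
    filter_upwards [hU.mem_nhds hyU, hloc y hyU] with w hwU hwE
    exact ⟨hwU, hwE.trans hyE⟩
  have hopen2 : IsOpen {y | y ∈ U ∧ E y ≠ E x₀} := by
    rw [isOpen_iff_mem_nhds]
    rintro y ⟨hyU, hyE⟩
    filter_upwards [hU.mem_nhds hyU, hloc y hyU] with w hwU hwE
    exact ⟨hwU, fun hc => hyE (hwE ▸ hc)⟩
  have hcover : U ⊆ {y | y ∈ U ∧ E y = E x₀} ∪ {y | y ∈ U ∧ E y ≠ E x₀} := by
    intro y hy
    by_cases h : E y = E x₀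
    · exact Or.inl ⟨hy, h⟩
    · exact Or.inr ⟨hy, h⟩
  obtain ⟨q, hqU, ⟨⟨_, hq1⟩, ⟨_, hq2⟩⟩⟩ := hUc.isPreconnected _ _ hopen1 hopen2 hcover
    ⟨x₀, hx₀, hx₀, rfl⟩ ⟨p, hp, hp, hne⟩
  exact hq2 hq1
end

section
/- Let U ⊆ ℝ² be open and connected and let i : U → ℝ³ be a smooth immersion whose first fundamental form is g_ij = E·δ_ij with E smooth, strictly positive, and harmonic, and whose second fundamental form is l_ij = e·δ_ij. Then e ≡ 0, the Gaussian curvature of i vanishes identically, and i(U) is contained in an affine plane of ℝ³. -/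
open RealInnerProductSpace

abbrev E3 := EuclideanSpace ℝ (Fin 3)

noncomputable def pduV (f : ℝ × ℝ → E3) : ℝ × ℝ → E3 := fun p => fderiv ℝ f p (1, 0)
noncomputable def pdvV (f : ℝ × ℝ → E3) : ℝ × ℝ → E3 := fun p => fderiv ℝ f p (0, 1)

section helpers

variable {F : Type*} [NormedAddCommGroup F] [NormedSpace ℝ F]
variable {U : Set (ℝ × ℝ)}

theorem cdo_fapp (hU : IsOpen U) {g : ℝ × ℝ → F} (hg : ContDiffOn ℝ (⊤ : ℕ∞) g U) (w : ℝ × ℝ) :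
    ContDiffOn ℝ (⊤ : ℕ∞) (fun p => fderiv ℝ g p w) U :=
  (hg.fderiv_of_isOpen hU (by simp)).clm_apply contDiffOn_const

theorem diffat (hU : IsOpen U) {g : ℝ × ℝ → F} (hg : ContDiffOn ℝ (⊤ : ℕ∞) g U) {p : ℝ × ℝ} (hp : p ∈ U) :
    DifferentiableAt ℝ g p :=
  ((hg.differentiableOn (by simp)).differentiableAt (hU.mem_nhds hp))

theorem fderiv_congr_on (hU : IsOpen U) {A B : ℝ × ℝ → F} (h : ∀ q ∈ U, A q = B q) {p : ℝ × ℝ} (hp : p ∈ U) :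
    fderiv ℝ A p = fderiv ℝ B p :=
  Filter.EventuallyEq.fderiv_eq (Filter.eventuallyEq_of_mem (hU.mem_nhds hp) h)

theorem clairaut (hU : IsOpen U) {g : ℝ × ℝ → F} (hg : ContDiffOn ℝ (⊤ : ℕ∞) g U) {p : ℝ × ℝ} (hp : p ∈ U)
    (v w : ℝ × ℝ) :
    fderiv ℝ (fun q => fderiv ℝ g q w) p v = fderiv ℝ (fun q => fderiv ℝ g q v) p w := by
  have h1 : ∀ᶠ y in nhds p, HasFDerivAt g (fderiv ℝ g y) y := by
    filter_upwards [hU.mem_nhds hp] with y hy using (diffat hU hg hy).hasFDerivAt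
  have hd : DifferentiableAt ℝ (fderiv ℝ g) p :=
    diffat hU (hg.fderiv_of_isOpen hU (by simp)) hp
  have hsym := second_derivative_symmetric_of_eventually h1 hd.hasFDerivAt v w
  have e1 := ((ContinuousLinearMap.apply ℝ F w).hasFDerivAt.comp p hd.hasFDerivAt).fderiv
  have e2 := ((ContinuousLinearMap.apply ℝ F v).hasFDerivAt.comp p hd.hasFDerivAt).fderiv
  calc fderiv ℝ (fun q => fderiv ℝ g q w) p v
      = fderiv ℝ ((ContinuousLinearMap.apply ℝ F w) ∘ (fderiv ℝ g)) p v := rfl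
    _ = fderiv ℝ (fderiv ℝ g) p v w := by rw [e1]; rfl
    _ = fderiv ℝ (fderiv ℝ g) p w v := hsym
    _ = fderiv ℝ ((ContinuousLinearMap.apply ℝ F v) ∘ (fderiv ℝ g)) p w := by rw [e2]; rfl

end helpers

section helpers2
variable {F : Type*} [NormedAddCommGroup F] [NormedSpace ℝ F] {U : Set (ℝ × ℝ)}

theorem eq_of_fderiv_zero (hU : IsOpen U) (hUc : IsPreconnected U) {g : ℝ × ℝ → F}
    (hdiff : ∀ p ∈ U, DifferentiableAt ℝ g p) (hz : ∀ p ∈ U, fderiv ℝ g p = 0)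
    {a b : ℝ × ℝ} (ha : a ∈ U) (hb : b ∈ U) : g a = g b := by
  haveI : PreconnectedSpace U := Subtype.preconnectedSpace hUc
  have hloc : IsLocallyConstant (fun x : U => g x) := by
    rw [IsLocallyConstant.iff_exists_open]
    intro x
    obtain ⟨ε, hε, hball⟩ := Metric.isOpen_iff.1 hU x x.2
    refine ⟨Subtype.val ⁻¹' Metric.ball (x : ℝ × ℝ) ε, continuous_subtype_val.isOpen_preimage _ Metric.isOpen_ball, Metric.mem_ball_self hε, fun y hy => ?_⟩
    have hconv : Convex ℝ (Metric.ball (x : ℝ × ℝ) ε) := convex_ball _ _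
    refine hconv.is_const_of_fderivWithin_eq_zero
      (fun z hz' => (hdiff z (hball hz')).differentiableWithinAt) (fun z hz' => ?_) hy (Metric.mem_ball_self hε)
    rw [fderivWithin_of_isOpen Metric.isOpen_ball hz']
    exact hz z (hball hz')
  exact hloc.apply_eq_of_preconnectedSpace ⟨a, ha⟩ ⟨b, hb⟩

theorem on_aux (v : Fin 4 → E3) (hnorm : ∀ i, ‖v i‖ = 1)
    (hij : ∀ i j, i < j → ⟪v i, v j⟫ = 0) : Orthonormal ℝ v := by
  rw [orthonormal_iff_ite]
  intro i j
  rcases lt_trichotomy i j with h | h | h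
  · rw [hij i j h, if_neg (Fin.ne_of_lt h)]
  · subst h
    rw [if_pos rfl, real_inner_self_eq_norm_sq, hnorm, one_pow]
  · rw [real_inner_comm, hij j i h, if_neg (Fin.ne_of_lt h).symm]

theorem perp_decomp {Ep : ℝ} (hEp : 0 < Ep) (a b n : E3)
    (haa : ⟪a, a⟫ = Ep) (hbb : ⟪b, b⟫ = Ep) (hab : ⟪a, b⟫ = 0)
    (hn : ‖n‖ = 1) (hna : ⟪n, a⟫ = 0) (hnb : ⟪n, b⟫ = 0)
    {X : E3} (hXa : ⟪X, a⟫ = 0) (hXb : ⟪X, b⟫ = 0) (hXn : ⟪X, n⟫ = 0) : X = 0 := by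
  by_contra hX
  have hX' : (0:ℝ) < ‖X‖ := norm_pos_iff.2 hX
  have hsE : Real.sqrt Ep > 0 := Real.sqrt_pos.2 hEp
  have hna' : ‖a‖ = Real.sqrt Ep := by
    rw [← Real.sqrt_sq (norm_nonneg a), ← real_inner_self_eq_norm_sq, haa]
  have hnb' : ‖b‖ = Real.sqrt Ep := by
    rw [← Real.sqrt_sq (norm_nonneg b), ← real_inner_self_eq_norm_sq, hbb]
  have han : ⟪a, n⟫ = 0 := by rw [real_inner_comm]; exact hna
  have hbn : ⟪b, n⟫ = 0 := by rw [real_inner_comm]; exact hnb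
  have haX : ⟪a, X⟫ = 0 := by rw [real_inner_comm]; exact hXa
  have hbX : ⟪b, X⟫ = 0 := by rw [real_inner_comm]; exact hXb
  have hnX : ⟪n, X⟫ = 0 := by rw [real_inner_comm]; exact hXn
  set v : Fin 4 → E3 := ![(Real.sqrt Ep)⁻¹ • a, (Real.sqrt Ep)⁻¹ • b, n, ‖X‖⁻¹ • X] with hv
  have horth : Orthonormal ℝ v := by
    apply on_aux
    · intro i
      fin_cases i
      · show ‖(Real.sqrt Ep)⁻¹ • a‖ = 1
        rw [norm_smul, hna', Real.norm_eq_abs, abs_of_pos (inv_pos.2 hsE),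
          inv_mul_cancel₀ hsE.ne']
      · show ‖(Real.sqrt Ep)⁻¹ • b‖ = 1
        rw [norm_smul, hnb', Real.norm_eq_abs, abs_of_pos (inv_pos.2 hsE),
          inv_mul_cancel₀ hsE.ne']
      · exact hn
      · show ‖‖X‖⁻¹ • X‖ = 1
        rw [norm_smul, Real.norm_eq_abs, abs_of_pos (inv_pos.2 hX'),
          inv_mul_cancel₀ hX'.ne']
    · intro i j h
      fin_cases i <;> fin_cases j <;>
          [ exact absurd h (by decide);
            (show ⟪(Real.sqrt Ep)⁻¹ • a, (Real.sqrt Ep)⁻¹ • b⟫ = (0:ℝ);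
             rw [real_inner_smul_left, real_inner_smul_right, hab]; ring);
            (show ⟪(Real.sqrt Ep)⁻¹ • a, n⟫ = (0:ℝ);
             rw [real_inner_smul_left, han]; ring);
            (show ⟪(Real.sqrt Ep)⁻¹ • a, ‖X‖⁻¹ • X⟫ = (0:ℝ);
             rw [real_inner_smul_left, real_inner_smul_right, haX]; ring);
            exact absurd h (by decide);
            exact absurd h (by decide);
            (show ⟪(Real.sqrt Ep)⁻¹ • b, n⟫ = (0:ℝ);
             rw [real_inner_smul_left, hbn]; ring);
            (show ⟪(Real.sqrt Ep)⁻¹ • b, ‖X‖⁻¹ • X⟫ = (0:ℝ);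
             rw [real_inner_smul_left, real_inner_smul_right, hbX]; ring);
            exact absurd h (by decide);
            exact absurd h (by decide);
            exact absurd h (by decide);
            (show ⟪n, ‖X‖⁻¹ • X⟫ = (0:ℝ);
             rw [real_inner_smul_right, hnX]; ring);
            exact absurd h (by decide);
            exact absurd h (by decide);
            exact absurd h (by decide);
            exact absurd h (by decide)]
  have hcard := horth.linearIndependent.fintype_card_le_finrank
  simp [finrank_euclideanSpace] at hcard

section helpers3
variable {F : Type*} [NormedAddCommGroup F] [NormedSpace ℝ F] {U : Set (ℝ × ℝ)}

theorem D_inner_eq (hU : IsOpen U) {A B : ℝ × ℝ → E3} {c : ℝ × ℝ → ℝ}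
    (hA : ContDiffOn ℝ (⊤ : ℕ∞) A U) (hB : ContDiffOn ℝ (⊤ : ℕ∞) B U)
    (h : ∀ q ∈ U, ⟪A q, B q⟫ = c q) {p : ℝ × ℝ} (hp : p ∈ U) (w : ℝ × ℝ) :
    ⟪A p, fderiv ℝ B p w⟫ + ⟪fderiv ℝ A p w, B p⟫ = fderiv ℝ c p w := by
  rw [← fderiv_inner_apply ℝ (diffat hU hA hp) (diffat hU hB hp) w]
  exact congrFun (congrArg _ (fderiv_congr_on hU h hp)) w

theorem D_add {A B : ℝ × ℝ → F} {p : ℝ × ℝ} (hA : DifferentiableAt ℝ A p)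
    (hB : DifferentiableAt ℝ B p) (w : ℝ × ℝ) :
    fderiv ℝ (fun q => A q + B q) p w = fderiv ℝ A p w + fderiv ℝ B p w := by
  rw [fderiv_fun_add hA hB]; rfl

theorem D_smul {c : ℝ × ℝ → ℝ} {A : ℝ × ℝ → F} {p : ℝ × ℝ} (hc : DifferentiableAt ℝ c p)
    (hA : DifferentiableAt ℝ A p) (w : ℝ × ℝ) :
    fderiv ℝ (fun q => c q • A q) p w = c p • fderiv ℝ A p w + fderiv ℝ c p w • A p := by
  rw [fderiv_fun_smul hc hA]; simp

theorem D_mul {a b : ℝ × ℝ → ℝ} {p : ℝ × ℝ} (ha : DifferentiableAt ℝ a p)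
    (hb : DifferentiableAt ℝ b p) (w : ℝ × ℝ) :
    fderiv ℝ (fun q => a q * b q) p w = a p * fderiv ℝ b p w + b p * fderiv ℝ a p w := by
  rw [fderiv_fun_mul ha hb]; simp [mul_comm]

theorem D_cmul {a : ℝ × ℝ → ℝ} {p : ℝ × ℝ} (k : ℝ) (ha : DifferentiableAt ℝ a p) (w : ℝ × ℝ) :
    fderiv ℝ (fun q => k * a q) p w = k * fderiv ℝ a p w := by
  rw [fderiv_const_mul ha k]; simp

theorem D_negf {a : ℝ × ℝ → ℝ} {p : ℝ × ℝ} (w : ℝ × ℝ) :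
    fderiv ℝ (fun q => -(a q)) p w = -(fderiv ℝ a p w) := by
  rw [fderiv_fun_neg]; simp

theorem D_smul3 {c1 c2 c3 : ℝ × ℝ → ℝ} {A1 A2 A3 : ℝ × ℝ → F} {p : ℝ × ℝ}
    (hc1 : DifferentiableAt ℝ c1 p) (hc2 : DifferentiableAt ℝ c2 p)
    (hc3 : DifferentiableAt ℝ c3 p) (hA1 : DifferentiableAt ℝ A1 p)
    (hA2 : DifferentiableAt ℝ A2 p) (hA3 : DifferentiableAt ℝ A3 p) (w : ℝ × ℝ) :
    fderiv ℝ (fun q => c1 q • A1 q + c2 q • A2 q + c3 q • A3 q) p w =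
      (c1 p • fderiv ℝ A1 p w + fderiv ℝ c1 p w • A1 p) +
      (c2 p • fderiv ℝ A2 p w + fderiv ℝ c2 p w • A2 p) +
      (c3 p • fderiv ℝ A3 p w + fderiv ℝ c3 p w • A3 p) := by
  rw [D_add ((hc1.fun_smul hA1).fun_add (hc2.fun_smul hA2)) (hc3.fun_smul hA3),
    D_add (hc1.fun_smul hA1) (hc2.fun_smul hA2), D_smul hc1 hA1, D_smul hc2 hA2, D_smul hc3 hA3]

theorem D_smul2 {c1 c2 : ℝ × ℝ → ℝ} {A1 A2 : ℝ × ℝ → F} {p : ℝ × ℝ}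
    (hc1 : DifferentiableAt ℝ c1 p) (hc2 : DifferentiableAt ℝ c2 p)
    (hA1 : DifferentiableAt ℝ A1 p) (hA2 : DifferentiableAt ℝ A2 p) (w : ℝ × ℝ) :
    fderiv ℝ (fun q => c1 q • A1 q + c2 q • A2 q) p w =
      (c1 p • fderiv ℝ A1 p w + fderiv ℝ c1 p w • A1 p) +
      (c2 p • fderiv ℝ A2 p w + fderiv ℝ c2 p w • A2 p) := by
  rw [D_add (hc1.fun_smul hA1) (hc2.fun_smul hA2), D_smul hc1 hA1, D_smul hc2 hA2]

theorem D_congr (hU : IsOpen U) {A B : ℝ × ℝ → F} (h : ∀ q ∈ U, A q = B q) {p : ℝ × ℝ}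
    (hp : p ∈ U) (w : ℝ × ℝ) : fderiv ℝ A p w = fderiv ℝ B p w :=
  congrFun (congrArg _ (fderiv_congr_on hU h hp)) w

end helpers3
set_option maxHeartbeats 2000000 in
theorem stmt_9 (U : Set (ℝ × ℝ)) (hU : IsOpen U) (hUc : IsConnected U)
    (f : ℝ × ℝ → E3) (hf : ContDiffOn ℝ (⊤ : ℕ∞) f U)
    (E e : ℝ × ℝ → ℝ) (hE : ContDiffOn ℝ (⊤ : ℕ∞) E U)
    (hEpos : ∀ p ∈ U, 0 < E p)
    (hharm : ∀ p ∈ U, pdu (pdu E) p + pdv (pdv E) p = 0)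
    (hI11 : ∀ p ∈ U, ⟪pduV f p, pduV f p⟫ = E p)
    (hI22 : ∀ p ∈ U, ⟪pdvV f p, pdvV f p⟫ = E p)
    (hI12 : ∀ p ∈ U, ⟪pduV f p, pdvV f p⟫ = 0)
    (N : ℝ × ℝ → E3)
    (hN1 : ∀ p ∈ U, ‖N p‖ = 1)
    (hNu : ∀ p ∈ U, ⟪N p, pduV f p⟫ = 0)
    (hNv : ∀ p ∈ U, ⟪N p, pdvV f p⟫ = 0)
    (hII11 : ∀ p ∈ U, ⟪pduV (pduV f) p, N p⟫ = e p)
    (hII22 : ∀ p ∈ U, ⟪pdvV (pdvV f) p, N p⟫ = e p)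
    (hII12 : ∀ p ∈ U, ⟪pdvV (pduV f) p, N p⟫ = 0) :
    (∀ p ∈ U, e p = 0) ∧
    (∀ p ∈ U, (e p)^2 / (E p)^2 = 0) ∧
    (∃ p₀ n : E3, n ≠ 0 ∧ ∀ q ∈ U, ⟪f q - p₀, n⟫ = 0) := by
  -- abbreviations
  set fu : ℝ × ℝ → E3 := pduV f with hfu_def
  set fv : ℝ × ℝ → E3 := pdvV f with hfv_def
  set fuu : ℝ × ℝ → E3 := pduV fu with hfuu_def
  set fuv : ℝ × ℝ → E3 := pdvV fu with hfuv_def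
  set fvv : ℝ × ℝ → E3 := pdvV fv with hfvv_def
  set P : ℝ × ℝ → ℝ := pdu E with hP_def
  set Q : ℝ × ℝ → ℝ := pdv E with hQ_def
  set W : ℝ × ℝ → E3 := fun q => fuu q + fvv q with hW_def
  -- smoothness
  have sfu : ContDiffOn ℝ (⊤ : ℕ∞) fu U := cdo_fapp hU hf (1,0)
  have sfv : ContDiffOn ℝ (⊤ : ℕ∞) fv U := cdo_fapp hU hf (0,1)
  have sfuu : ContDiffOn ℝ (⊤ : ℕ∞) fuu U := cdo_fapp hU sfu (1,0)
  have sfuv : ContDiffOn ℝ (⊤ : ℕ∞) fuv U := cdo_fapp hU sfu (0,1)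
  have sfvv : ContDiffOn ℝ (⊤ : ℕ∞) fvv U := cdo_fapp hU sfv (0,1)
  have sP : ContDiffOn ℝ (⊤ : ℕ∞) P U := cdo_fapp hU hE (1,0)
  have sQ : ContDiffOn ℝ (⊤ : ℕ∞) Q U := cdo_fapp hU hE (0,1)
  have sW : ContDiffOn ℝ (⊤ : ℕ∞) W U := fun x hx => ((sfuu x hx).add (sfvv x hx))
  -- swap lemma : pduV fv = fuv on U
  have hswap : ∀ p ∈ U, pduV fv p = fuv p := by
    intro p hp
    exact clairaut hU hf hp (1,0) (0,1)
  -- first-order identities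
  have a1 : ∀ p ∈ U, ⟪fuu p, fu p⟫ = (1/2) * P p := by
    intro p hp
    have h := D_inner_eq hU sfu sfu hI11 hp (1,0)
    have e1 : fderiv ℝ fu p (1,0) = fuu p := rfl
    have h2 : fderiv ℝ E p (1,0) = P p := rfl
    rw [e1, h2] at h
    linarith [real_inner_comm (fuu p) (fu p)]
  have a2 : ∀ p ∈ U, ⟪fuv p, fu p⟫ = (1/2) * Q p := by
    intro p hp
    have h := D_inner_eq hU sfu sfu hI11 hp (0,1)
    have e1 : fderiv ℝ fu p (0,1) = fuv p := rfl
    have h2 : fderiv ℝ E p (0,1) = Q p := rfl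
    rw [e1, h2] at h
    linarith [real_inner_comm (fuv p) (fu p)]
  have a3 : ∀ p ∈ U, ⟪fuv p, fv p⟫ = (1/2) * P p := by
    intro p hp
    have h := D_inner_eq hU sfv sfv hI22 hp (1,0)
    have e1 : fderiv ℝ fv p (1,0) = fuv p := hswap p hp
    have h2 : fderiv ℝ E p (1,0) = P p := rfl
    rw [e1, h2] at h
    linarith [real_inner_comm (fuv p) (fv p)]
  have a4 : ∀ p ∈ U, ⟪fvv p, fv p⟫ = (1/2) * Q p := by
    intro p hp
    have h := D_inner_eq hU sfv sfv hI22 hp (0,1)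
    have e1 : fderiv ℝ fv p (0,1) = fvv p := rfl
    have h2 : fderiv ℝ E p (0,1) = Q p := rfl
    rw [e1, h2] at h
    linarith [real_inner_comm (fvv p) (fv p)]
  have a5 : ∀ p ∈ U, ⟪fuu p, fv p⟫ = -((1/2) * Q p) := by
    intro p hp
    have h := D_inner_eq hU sfu sfv hI12 hp (1,0)
    have e1 : fderiv ℝ fu p (1,0) = fuu p := rfl
    have e2 : fderiv ℝ fv p (1,0) = fuv p := hswap p hp
    have e3 : fderiv ℝ (fun _ : ℝ × ℝ => (0:ℝ)) p (1,0) = 0 := by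
      rw [fderiv_const_apply]; rfl
    rw [e1, e2] at h
    have h4 : fderiv ℝ (fun q => (0:ℝ)) p (1, 0) = 0 := e3
    rw [h4] at h
    linarith [a2 p hp, real_inner_comm (fu p) (fuv p)]
  have a6 : ∀ p ∈ U, ⟪fvv p, fu p⟫ = -((1/2) * P p) := by
    intro p hp
    have h := D_inner_eq hU sfu sfv hI12 hp (0,1)
    have e1 : fderiv ℝ fu p (0,1) = fuv p := rfl
    have e2 : fderiv ℝ fv p (0,1) = fvv p := rfl
    rw [e1, e2] at h
    have h4 : fderiv ℝ (fun q => (0:ℝ)) p (0, 1) = 0 := by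
      rw [fderiv_const_apply]; rfl
    rw [h4] at h
    linarith [a3 p hp, real_inner_comm (fu p) (fvv p)]
  -- inner products with N (pointwise)
  have hNN : ∀ p ∈ U, ⟪N p, N p⟫ = 1 := by
    intro p hp
    rw [real_inner_self_eq_norm_sq, hN1 p hp, one_pow]
  -- inner products with W
  have wfu : ∀ p ∈ U, ⟪W p, fu p⟫ = 0 := by
    intro p hp
    have : ⟪W p, fu p⟫ = ⟪fuu p, fu p⟫ + ⟪fvv p, fu p⟫ := inner_add_left _ _ _
    rw [this, a1 p hp, a6 p hp]; ring
  have wfv : ∀ p ∈ U, ⟪W p, fv p⟫ = 0 := by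
    intro p hp
    have : ⟪W p, fv p⟫ = ⟪fuu p, fv p⟫ + ⟪fvv p, fv p⟫ := inner_add_left _ _ _
    rw [this, a5 p hp, a4 p hp]; ring
  have wN : ∀ p ∈ U, ⟪W p, N p⟫ = 2 * e p := by
    intro p hp
    have : ⟪W p, N p⟫ = ⟪fuu p, N p⟫ + ⟪fvv p, N p⟫ := inner_add_left _ _ _
    rw [this, hII11 p hp, hII22 p hp]; ring
  -- decompositions
  have dec2 : ∀ p ∈ U, (2*E p) • fuv p = Q p • fu p + P p • fv p := by
    intro p hp
    have hX : (2*E p) • fuv p - (Q p • fu p + P p • fv p) = 0 := by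
      apply perp_decomp (hEpos p hp) (fu p) (fv p) (N p) (hI11 p hp) (hI22 p hp) (hI12 p hp)
        (hN1 p hp) (hNu p hp) (hNv p hp)
      · simp only [inner_sub_left, inner_add_left, real_inner_smul_left]
        rw [a2 p hp, hI11 p hp, real_inner_comm (fu p) (fv p), hI12 p hp]; ring
      · simp only [inner_sub_left, inner_add_left, real_inner_smul_left]
        rw [a3 p hp, hI22 p hp, hI12 p hp]; ring
      · simp only [inner_sub_left, inner_add_left, real_inner_smul_left]
        rw [hII12 p hp, real_inner_comm (N p) (fu p), hNu p hp,
          real_inner_comm (N p) (fv p), hNv p hp]; ring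
    exact sub_eq_zero.mp hX
  have dec1 : ∀ p ∈ U, (2*E p) • fuu p = P p • fu p + (-(Q p)) • fv p + E p • W p := by
    intro p hp
    have hX : (2*E p) • fuu p - (P p • fu p + (-(Q p)) • fv p + E p • W p) = 0 := by
      apply perp_decomp (hEpos p hp) (fu p) (fv p) (N p) (hI11 p hp) (hI22 p hp) (hI12 p hp)
        (hN1 p hp) (hNu p hp) (hNv p hp)
      · simp only [inner_sub_left, inner_add_left, real_inner_smul_left]
        rw [a1 p hp, hI11 p hp, real_inner_comm (fu p) (fv p), hI12 p hp, wfu p hp]; ring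
      · simp only [inner_sub_left, inner_add_left, real_inner_smul_left]
        rw [a5 p hp, hI22 p hp, hI12 p hp, wfv p hp]; ring
      · simp only [inner_sub_left, inner_add_left, real_inner_smul_left]
        rw [hII11 p hp, real_inner_comm (N p) (fu p), hNu p hp,
          real_inner_comm (N p) (fv p), hNv p hp, wN p hp]; ring
    exact sub_eq_zero.mp hX
  have dec3 : ∀ p ∈ U, (2*E p) • fvv p = (-(P p)) • fu p + Q p • fv p + E p • W p := by
    intro p hp
    have hX : (2*E p) • fvv p - ((-(P p)) • fu p + Q p • fv p + E p • W p) = 0 := by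
      apply perp_decomp (hEpos p hp) (fu p) (fv p) (N p) (hI11 p hp) (hI22 p hp) (hI12 p hp)
        (hN1 p hp) (hNu p hp) (hNv p hp)
      · simp only [inner_sub_left, inner_add_left, real_inner_smul_left]
        rw [a6 p hp, hI11 p hp, real_inner_comm (fu p) (fv p), hI12 p hp, wfu p hp]; ring
      · simp only [inner_sub_left, inner_add_left, real_inner_smul_left]
        rw [a4 p hp, hI22 p hp, hI12 p hp, wfv p hp]; ring
      · simp only [inner_sub_left, inner_add_left, real_inner_smul_left]
        rw [hII22 p hp, real_inner_comm (N p) (fu p), hNu p hp,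
          real_inner_comm (N p) (fv p), hNv p hp, wN p hp]; ring
    exact sub_eq_zero.mp hX
  have decW : ∀ p ∈ U, W p = (2 * e p) • N p := by
    intro p hp
    have hX : W p - (2 * e p) • N p = 0 := by
      apply perp_decomp (hEpos p hp) (fu p) (fv p) (N p) (hI11 p hp) (hI22 p hp) (hI12 p hp)
        (hN1 p hp) (hNu p hp) (hNv p hp)
      · simp only [inner_sub_left, real_inner_smul_left]
        rw [wfu p hp, hNu p hp]; ring
      · simp only [inner_sub_left, real_inner_smul_left]
        rw [wfv p hp, hNv p hp]; ring
      · simp only [inner_sub_left, real_inner_smul_left]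
        rw [wN p hp, hNN p hp]; ring
    exact sub_eq_zero.mp hX
  have sval : ∀ p ∈ U, ⟪W p, W p⟫ = 4 * e p^2 := by
    intro p hp
    rw [decW p hp, real_inner_smul_left, real_inner_smul_right, hNN p hp]; ring
  -- Gauss: mixed partials symmetry gives the key identity
  have G3 : ∀ p ∈ U, pduV fvv p = pdvV fuv p := by
    intro p hp
    have h1 : pduV (pdvV fv) p = pdvV (pduV fv) p := clairaut hU sfv hp (1,0) (0,1)
    have h2 : fderiv ℝ (pduV fv) p (0,1) = fderiv ℝ fuv p (0,1) := D_congr hU hswap hp (0,1)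
    exact h1.trans h2
  have GaussA : ∀ p ∈ U, ⟪fvv p, fuu p⟫ = ⟪fuv p, fuv p⟫ := by
    intro p hp
    have gd1 := D_inner_eq hU sfvv sfu a6 hp (1,0)
    have gd2 := D_inner_eq hU sfuv sfu a2 hp (0,1)
    have e1 : fderiv ℝ fu p (1,0) = fuu p := rfl
    have e2 : fderiv ℝ fu p (0,1) = fuv p := rfl
    have e3 : fderiv ℝ fvv p (1,0) = pdvV fuv p := G3 p hp
    have e4 : fderiv ℝ fuv p (0,1) = pdvV fuv p := rfl
    rw [e1, e3] at gd1
    rw [e2, e4] at gd2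
    have r1 : fderiv ℝ (fun q => -(1/2 * P q)) p (1,0) = -(1/2 * pdu P p) := by
      rw [fderiv_fun_neg, fderiv_const_mul (diffat hU sP hp)]
      simp [pdu]
    have r2 : fderiv ℝ (fun q => 1/2 * Q q) p (0,1) = 1/2 * pdv Q p := by
      rw [fderiv_const_mul (diffat hU sQ hp)]
      simp [pdv]
    rw [r1] at gd1
    rw [r2] at gd2
    have hh := hharm p hp
    linarith [real_inner_comm (fvv p) (fuu p), real_inner_comm (fuv p) (fuv p)]
  -- expansions of second-derivative inner products
  have B1 : ∀ p ∈ U, 4*(E p)^2*⟪fvv p, fuu p⟫ =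
      (-(P p^2) - Q p^2)*E p + (E p)^2 * ⟪W p, W p⟫ := by
    intro p hp
    have i3 : ⟪fu p, fv p⟫ = 0 := hI12 p hp
    have i4 : ⟪fv p, fu p⟫ = 0 := by rw [real_inner_comm (fu p) (fv p)]; exact hI12 p hp
    have i7 : ⟪fu p, W p⟫ = 0 := by rw [real_inner_comm]; exact wfu p hp
    have i8 : ⟪fv p, W p⟫ = 0 := by rw [real_inner_comm]; exact wfv p hp
    have lhs : ⟪(2*E p) • fvv p, (2*E p) • fuu p⟫ = 4*(E p)^2*⟪fvv p, fuu p⟫ := by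
      rw [real_inner_smul_left, real_inner_smul_right]; ring
    have rhs : ⟪(2*E p) • fvv p, (2*E p) • fuu p⟫ =
        (-(P p^2) - Q p^2)*E p + (E p)^2 * ⟪W p, W p⟫ := by
      rw [dec3 p hp, dec1 p hp]
      simp only [inner_add_left, inner_add_right, real_inner_smul_left, real_inner_smul_right]
      rw [hI11 p hp, hI22 p hp]
      simp only [i3, i4, i7, i8, wfu p hp, wfv p hp]
      ring
    linarith
  have B2 : ∀ p ∈ U, 4*(E p)^2*⟪fuv p, fuv p⟫ = (P p^2 + Q p^2)*E p := by
    intro p hp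
    have i3 : ⟪fu p, fv p⟫ = 0 := hI12 p hp
    have i4 : ⟪fv p, fu p⟫ = 0 := by rw [real_inner_comm (fu p) (fv p)]; exact hI12 p hp
    have lhs : ⟪(2*E p) • fuv p, (2*E p) • fuv p⟫ = 4*(E p)^2*⟪fuv p, fuv p⟫ := by
      rw [real_inner_smul_left, real_inner_smul_right]; ring
    have rhs : ⟪(2*E p) • fuv p, (2*E p) • fuv p⟫ = (P p^2 + Q p^2)*E p := by
      rw [dec2 p hp]
      simp only [inner_add_left, inner_add_right, real_inner_smul_left, real_inner_smul_right]
      rw [hI11 p hp, hI22 p hp]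
      simp only [i3, i4]
      ring
    linarith
  -- Gauss relation : E * |W|^2 = 2 * (P^2 + Q^2)
  have GaussB : ∀ p ∈ U, E p * ⟪W p, W p⟫ = 2*(P p^2 + Q p^2) := by
    intro p hp
    have hE0 : E p ≠ 0 := (hEpos p hp).ne'
    have key : E p * (E p * ⟪W p, W p⟫ - 2*(P p^2 + Q p^2)) = 0 := by
      linear_combination (B2 p hp) - (B1 p hp) + 4*(E p)^2*(GaussA p hp)
    rcases mul_eq_zero.mp key with h | h
    · exact absurd h hE0
    · linarith
  -- the function s = |W|^2 and h = P^2+Q^2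
  set s : ℝ × ℝ → ℝ := fun q => ⟪W q, W q⟫ with hs_def
  set h : ℝ × ℝ → ℝ := fun q => P q * P q + Q q * Q q with hh_def
  have ss : ContDiffOn ℝ (⊤ : ℕ∞) s U := ContDiffOn.inner ℝ sW sW
  have sh : ContDiffOn ℝ (⊤ : ℕ∞) h U := (sP.mul sP).add (sQ.mul sQ)
  -- cleaned inner products with W
  have m2' : ∀ p ∈ U, ⟪fuv p, W p⟫ = 0 := by
    intro p hp
    have i7 : ⟪fu p, W p⟫ = 0 := by rw [real_inner_comm]; exact wfu p hp
    have i8 : ⟪fv p, W p⟫ = 0 := by rw [real_inner_comm]; exact wfv p hp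
    have := congrArg (fun X : E3 => ⟪X, W p⟫) (dec2 p hp)
    simp only [inner_add_left, real_inner_smul_left, i7, i8, mul_zero, add_zero] at this
    rcases mul_eq_zero.mp this with hh | hh
    · have := hEpos p hp; linarith
    · exact hh
  have m1 : ∀ p ∈ U, 2*(E p)*⟪fuu p, W p⟫ = E p * s p := by
    intro p hp
    have i7 : ⟪fu p, W p⟫ = 0 := by rw [real_inner_comm]; exact wfu p hp
    have i8 : ⟪fv p, W p⟫ = 0 := by rw [real_inner_comm]; exact wfv p hp
    have := congrArg (fun X : E3 => ⟪X, W p⟫) (dec1 p hp)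
    simp only [inner_add_left, real_inner_smul_left, i7, i8, mul_zero, add_zero, zero_add] at this
    rw [show (2*E p)*⟪fuu p, W p⟫ = 2*E p*⟪fuu p, W p⟫ from by ring, this]
  have m3 : ∀ p ∈ U, 2*(E p)*⟪fvv p, W p⟫ = E p * s p := by
    intro p hp
    have i7 : ⟪fu p, W p⟫ = 0 := by rw [real_inner_comm]; exact wfu p hp
    have i8 : ⟪fv p, W p⟫ = 0 := by rw [real_inner_comm]; exact wfv p hp
    have := congrArg (fun X : E3 => ⟪X, W p⟫) (dec3 p hp)
    simp only [inner_add_left, real_inner_smul_left, i7, i8, mul_zero, add_zero, zero_add] at this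
    rw [show (2*E p)*⟪fvv p, W p⟫ = 2*E p*⟪fvv p, W p⟫ from by ring, this]
  -- splitting of derivatives of W
  have spl : ∀ p ∈ U, fderiv ℝ W p (1,0) = pduV fuu p + pdvV fuv p := by
    intro p hp
    have h1 : fderiv ℝ W p (1,0) = fderiv ℝ fuu p (1,0) + fderiv ℝ fvv p (1,0) :=
      D_add (diffat hU sfuu hp) (diffat hU sfvv hp) (1,0)
    rw [h1]
    have h2 : fderiv ℝ fvv p (1,0) = pdvV fuv p := G3 p hp
    rw [h2]
    rfl
  have splv : ∀ p ∈ U, fderiv ℝ W p (0,1) = pduV fuv p + pdvV fvv p := by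
    intro p hp
    have h1 : fderiv ℝ W p (0,1) = fderiv ℝ fuu p (0,1) + fderiv ℝ fvv p (0,1) :=
      D_add (diffat hU sfuu hp) (diffat hU sfvv hp) (0,1)
    rw [h1]
    have h2 : fderiv ℝ fuu p (0,1) = pduV fuv p := (clairaut hU sfu hp (1,0) (0,1)).symm
    rw [h2]
    rfl
  -- derivative of |W|^2
  have psu : ∀ p ∈ U, pdu s p = 2*⟪fderiv ℝ W p (1,0), W p⟫ := by
    intro p hp
    have := fderiv_inner_apply ℝ (diffat hU sW hp) (diffat hU sW hp) ((1:ℝ),(0:ℝ))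
    have h2 : pdu s p = ⟪W p, fderiv ℝ W p (1,0)⟫ + ⟪fderiv ℝ W p (1,0), W p⟫ := this
    rw [h2, real_inner_comm (fderiv ℝ W p (1,0)) (W p)]
    ring
  have psv : ∀ p ∈ U, pdv s p = 2*⟪fderiv ℝ W p (0,1), W p⟫ := by
    intro p hp
    have := fderiv_inner_apply ℝ (diffat hU sW hp) (diffat hU sW hp) ((0:ℝ),(1:ℝ))
    have h2 : pdv s p = ⟪W p, fderiv ℝ W p (0,1)⟫ + ⟪fderiv ℝ W p (0,1), W p⟫ := this
    rw [h2, real_inner_comm (fderiv ℝ W p (0,1)) (W p)]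
    ring
  -- differentiate dec1 in u, dec2 in v : Codazzi in u
  have Ku : ∀ p ∈ U, E p^2 * pdu s p = 2*E p*(P p * s p) := by
    intro p hp
    have i7 : ⟪fu p, W p⟫ = 0 := by rw [real_inner_comm]; exact wfu p hp
    have i8 : ⟪fv p, W p⟫ = 0 := by rw [real_inner_comm]; exact wfv p hp
    have du1 : fderiv ℝ (fun q => (2*E q) • fuu q) p (1,0) =
        (2*E p) • pduV fuu p + (2*P p) • fuu p := by
      rw [D_smul ((diffat hU hE hp).const_mul 2) (diffat hU sfuu hp), D_cmul 2 (diffat hU hE hp)]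
      rfl
    have du2 : fderiv ℝ (fun q => P q • fu q + (-(Q q)) • fv q + E q • W q) p (1,0) =
        (P p • fuu p + pdu P p • fu p) + ((-(Q p)) • fuv p + (-(pdu Q p)) • fv p) +
          (E p • fderiv ℝ W p (1,0) + P p • W p) := by
      rw [D_smul3 (diffat hU sP hp) ((diffat hU sQ hp).fun_neg) (diffat hU hE hp)
        (diffat hU sfu hp) (diffat hU sfv hp) (diffat hU sW hp), D_negf]
      have r : fderiv ℝ fv p (1,0) = fuv p := hswap p hp
      rw [r]
      rfl
    have Vu1 : (2*E p) • pduV fuu p + (2*P p) • fuu p =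
        (P p • fuu p + pdu P p • fu p) + ((-(Q p)) • fuv p + (-(pdu Q p)) • fv p) +
          (E p • fderiv ℝ W p (1,0) + P p • W p) := by
      rw [← du1, ← du2]
      exact D_congr hU dec1 hp (1,0)
    have r1 := congrArg (fun X : E3 => ⟪X, W p⟫) Vu1
    simp only [inner_add_left, real_inner_smul_left, i7, i8, m2' p hp,
      mul_zero, add_zero, zero_add] at r1
    -- r1 : 2*E p*⟪pduV fuu p, W p⟫ + 2*P p*⟪fuu p,W p⟫ = P p*⟪fuu p,W p⟫ + E p*⟪fderiv W p (1,0), W p⟫ + P p*⟪W p, W p⟫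
    have du3 : fderiv ℝ (fun q => (2*E q) • fuv q) p (0,1) =
        (2*E p) • pdvV fuv p + (2*Q p) • fuv p := by
      rw [D_smul ((diffat hU hE hp).const_mul 2) (diffat hU sfuv hp), D_cmul 2 (diffat hU hE hp)]
      rfl
    have du4 : fderiv ℝ (fun q => Q q • fu q + P q • fv q) p (0,1) =
        (Q p • fuv p + pdv Q p • fu p) + (P p • fvv p + pdv P p • fv p) := by
      rw [D_smul2 (diffat hU sQ hp) (diffat hU sP hp) (diffat hU sfu hp) (diffat hU sfv hp)]
      rfl
    have Vu2 : (2*E p) • pdvV fuv p + (2*Q p) • fuv p =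
        (Q p • fuv p + pdv Q p • fu p) + (P p • fvv p + pdv P p • fv p) := by
      rw [← du3, ← du4]
      exact D_congr hU dec2 hp (0,1)
    have r2 := congrArg (fun X : E3 => ⟪X, W p⟫) Vu2
    simp only [inner_add_left, real_inner_smul_left, i7, i8, m2' p hp,
      mul_zero, add_zero, zero_add] at r2
    have sple : ⟪fderiv ℝ W p (1,0), W p⟫ = ⟪pduV fuu p, W p⟫ + ⟪pdvV fuv p, W p⟫ := by
      rw [spl p hp, inner_add_left]
    have hWW : ⟪W p, W p⟫ = s p := rfl
    linear_combination (E p^2)*(psu p hp) + (4*E p^2)*sple + (2*E p)*r1 + (2*E p)*r2 +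
      (-(P p))*(m1 p hp) + (P p)*(m3 p hp) + (2*E p*P p)*hWW
  -- Codazzi in v
  have Kv : ∀ p ∈ U, E p^2 * pdv s p = 2*E p*(Q p * s p) := by
    intro p hp
    have i7 : ⟪fu p, W p⟫ = 0 := by rw [real_inner_comm]; exact wfu p hp
    have i8 : ⟪fv p, W p⟫ = 0 := by rw [real_inner_comm]; exact wfv p hp
    have du1 : fderiv ℝ (fun q => (2*E q) • fvv q) p (0,1) =
        (2*E p) • pdvV fvv p + (2*Q p) • fvv p := by
      rw [D_smul ((diffat hU hE hp).const_mul 2) (diffat hU sfvv hp), D_cmul 2 (diffat hU hE hp)]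
      rfl
    have du2 : fderiv ℝ (fun q => (-(P q)) • fu q + Q q • fv q + E q • W q) p (0,1) =
        ((-(P p)) • fuv p + (-(pdv P p)) • fu p) + (Q p • fvv p + pdv Q p • fv p) +
          (E p • fderiv ℝ W p (0,1) + Q p • W p) := by
      rw [D_smul3 ((diffat hU sP hp).fun_neg) (diffat hU sQ hp) (diffat hU hE hp)
        (diffat hU sfu hp) (diffat hU sfv hp) (diffat hU sW hp), D_negf]
      rfl
    have Vv1 : (2*E p) • pdvV fvv p + (2*Q p) • fvv p =
        ((-(P p)) • fuv p + (-(pdv P p)) • fu p) + (Q p • fvv p + pdv Q p • fv p) +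
          (E p • fderiv ℝ W p (0,1) + Q p • W p) := by
      rw [← du1, ← du2]
      exact D_congr hU dec3 hp (0,1)
    have r1 := congrArg (fun X : E3 => ⟪X, W p⟫) Vv1
    simp only [inner_add_left, real_inner_smul_left, i7, i8, m2' p hp,
      mul_zero, add_zero, zero_add] at r1
    have du3 : fderiv ℝ (fun q => (2*E q) • fuv q) p (1,0) =
        (2*E p) • pduV fuv p + (2*P p) • fuv p := by
      rw [D_smul ((diffat hU hE hp).const_mul 2) (diffat hU sfuv hp), D_cmul 2 (diffat hU hE hp)]
      rfl
    have du4 : fderiv ℝ (fun q => Q q • fu q + P q • fv q) p (1,0) =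
        (Q p • fuu p + pdu Q p • fu p) + (P p • fuv p + pdu P p • fv p) := by
      rw [D_smul2 (diffat hU sQ hp) (diffat hU sP hp) (diffat hU sfu hp) (diffat hU sfv hp)]
      have r : fderiv ℝ fv p (1,0) = fuv p := hswap p hp
      rw [r]
      rfl
    have Vv2 : (2*E p) • pduV fuv p + (2*P p) • fuv p =
        (Q p • fuu p + pdu Q p • fu p) + (P p • fuv p + pdu P p • fv p) := by
      rw [← du3, ← du4]
      exact D_congr hU dec2 hp (1,0)
    have r2 := congrArg (fun X : E3 => ⟪X, W p⟫) Vv2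
    simp only [inner_add_left, real_inner_smul_left, i7, i8, m2' p hp,
      mul_zero, add_zero, zero_add] at r2
    have sple : ⟪fderiv ℝ W p (0,1), W p⟫ = ⟪pduV fuv p, W p⟫ + ⟪pdvV fvv p, W p⟫ := by
      rw [splv p hp, inner_add_left]
    have hWW : ⟪W p, W p⟫ = s p := rfl
    linear_combination (E p^2)*(psv p hp) + (4*E p^2)*sple + (2*E p)*r1 + (2*E p)*r2 +
      (-(Q p))*(m3 p hp) + (Q p)*(m1 p hp) + (2*E p*Q p)*hWW
  -- more smoothness
  have sPu : ContDiffOn ℝ (⊤ : ℕ∞) (pdu P) U := cdo_fapp hU sP (1,0)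
  have sPv : ContDiffOn ℝ (⊤ : ℕ∞) (pdv P) U := cdo_fapp hU sP (0,1)
  have sQu : ContDiffOn ℝ (⊤ : ℕ∞) (pdu Q) U := cdo_fapp hU sQ (1,0)
  have sQv : ContDiffOn ℝ (⊤ : ℕ∞) (pdv Q) U := cdo_fapp hU sQ (0,1)
  have shu : ContDiffOn ℝ (⊤ : ℕ∞) (pdu h) U := cdo_fapp hU sh (1,0)
  have shv : ContDiffOn ℝ (⊤ : ℕ∞) (pdv h) U := cdo_fapp hU sh (0,1)
  -- Gauss relation as a function identity with s and h
  have GaussB' : ∀ q ∈ U, E q * s q = 2 * h q := by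
    intro q hq
    have hs : s q = ⟪W q, W q⟫ := rfl
    have hhq : h q = P q * P q + Q q * Q q := rfl
    linear_combination (GaussB q hq) + (E q)*hs - 2*hhq
  -- E * h_u = 3 P h  and  E * h_v = 3 Q h
  have Hu : ∀ p ∈ U, E p * pdu h p = 3*(P p * h p) := by
    intro p hp
    have d1 : fderiv ℝ (fun q => E q * s q) p ((1:ℝ),(0:ℝ)) = E p * pdu s p + s p * P p :=
      D_mul (diffat hU hE hp) (diffat hU ss hp) ((1:ℝ),(0:ℝ))
    have d2 : fderiv ℝ (fun q => 2 * h q) p ((1:ℝ),(0:ℝ)) = 2 * pdu h p :=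
      D_cmul 2 (diffat hU sh hp) ((1:ℝ),(0:ℝ))
    have d3 := D_congr hU GaussB' hp ((1:ℝ),(0:ℝ))
    have A1 : E p * pdu s p + s p * P p = 2 * pdu h p := by rw [← d1, d3, d2]
    linear_combination (-(E p)/2)*A1 + (1/2)*(Ku p hp) + (3*P p/2)*(GaussB' p hp)
  have Hv : ∀ p ∈ U, E p * pdv h p = 3*(Q p * h p) := by
    intro p hp
    have d1 : fderiv ℝ (fun q => E q * s q) p ((0:ℝ),(1:ℝ)) = E p * pdv s p + s p * Q p :=
      D_mul (diffat hU hE hp) (diffat hU ss hp) ((0:ℝ),(1:ℝ))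
    have d2 : fderiv ℝ (fun q => 2 * h q) p ((0:ℝ),(1:ℝ)) = 2 * pdv h p :=
      D_cmul 2 (diffat hU sh hp) ((0:ℝ),(1:ℝ))
    have d3 := D_congr hU GaussB' hp ((0:ℝ),(1:ℝ))
    have A1 : E p * pdv s p + s p * Q p = 2 * pdv h p := by rw [← d1, d3, d2]
    linear_combination (-(E p)/2)*A1 + (1/2)*(Kv p hp) + (3*Q p/2)*(GaussB' p hp)
  -- Cauchy-Riemann type relations
  have cr1 : ∀ p ∈ U, pdv P p = pdu Q p := fun p hp => clairaut hU hE hp (0,1) (1,0)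
  have cr2 : ∀ p ∈ U, pdv Q p = -(pdu P p) := by
    intro p hp; have := hharm p hp; linarith
  have LP : ∀ p ∈ U, pdu (pdu P) p + pdv (pdv P) p = 0 := by
    intro p hp
    have h1 : pdv (pdv P) p = pdv (pdu Q) p := D_congr hU cr1 hp (0,1)
    have h2 : pdv (pdu Q) p = pdu (pdv Q) p := clairaut hU sQ hp (0,1) (1,0)
    have h3 : pdu (pdv Q) p = fderiv ℝ (fun q => -(pdu P q)) p (1,0) := D_congr hU cr2 hp (1,0)
    have h4 : fderiv ℝ (fun q => -(pdu P q)) p (1,0) = -(pdu (pdu P) p) := D_negf (1,0)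
    rw [h1, h2, h3, h4]; ring
  have LQ : ∀ p ∈ U, pdu (pdu Q) p + pdv (pdv Q) p = 0 := by
    intro p hp
    have c1' : ∀ q ∈ U, pdu Q q = pdv P q := fun q hq => (cr1 q hq).symm
    have h1 : pdu (pdu Q) p = pdu (pdv P) p := D_congr hU c1' hp (1,0)
    have h2 : pdu (pdv P) p = pdv (pdu P) p := (clairaut hU sP hp (0,1) (1,0)).symm
    have c2' : ∀ q ∈ U, pdu P q = -(pdv Q q) := by
      intro q hq; have := hharm q hq; linarith
    have h3 : pdv (pdu P) p = fderiv ℝ (fun q => -(pdv Q q)) p (0,1) := D_congr hU c2' hp (0,1)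
    have h4 : fderiv ℝ (fun q => -(pdv Q q)) p (0,1) = -(pdv (pdv Q) p) := D_negf (0,1)
    rw [h1, h2, h3, h4]; ring
  -- first derivatives of h
  have hu_eq : ∀ q ∈ U, pdu h q = 2*(P q * pdu P q) + 2*(Q q * pdu Q q) := by
    intro q hq
    have d : pdu h q = fderiv ℝ (fun q' => P q' * P q') q ((1:ℝ),(0:ℝ)) +
        fderiv ℝ (fun q' => Q q' * Q q') q ((1:ℝ),(0:ℝ)) :=
      D_add ((diffat hU sP hq).mul (diffat hU sP hq)) ((diffat hU sQ hq).mul (diffat hU sQ hq))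
        ((1:ℝ),(0:ℝ))
    have dP : fderiv ℝ (fun q' => P q' * P q') q ((1:ℝ),(0:ℝ)) =
        P q * pdu P q + P q * pdu P q :=
      D_mul (diffat hU sP hq) (diffat hU sP hq) ((1:ℝ),(0:ℝ))
    have dQ : fderiv ℝ (fun q' => Q q' * Q q') q ((1:ℝ),(0:ℝ)) =
        Q q * pdu Q q + Q q * pdu Q q :=
      D_mul (diffat hU sQ hq) (diffat hU sQ hq) ((1:ℝ),(0:ℝ))
    rw [d, dP, dQ]; ring
  have hv_eq : ∀ q ∈ U, pdv h q = 2*(P q * pdv P q) + 2*(Q q * pdv Q q) := by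
    intro q hq
    have d : pdv h q = fderiv ℝ (fun q' => P q' * P q') q ((0:ℝ),(1:ℝ)) +
        fderiv ℝ (fun q' => Q q' * Q q') q ((0:ℝ),(1:ℝ)) :=
      D_add ((diffat hU sP hq).mul (diffat hU sP hq)) ((diffat hU sQ hq).mul (diffat hU sQ hq))
        ((0:ℝ),(1:ℝ))
    have dP : fderiv ℝ (fun q' => P q' * P q') q ((0:ℝ),(1:ℝ)) =
        P q * pdv P q + P q * pdv P q :=
      D_mul (diffat hU sP hq) (diffat hU sP hq) ((0:ℝ),(1:ℝ))
    have dQ : fderiv ℝ (fun q' => Q q' * Q q') q ((0:ℝ),(1:ℝ)) =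
        Q q * pdv Q q + Q q * pdv Q q :=
      D_mul (diffat hU sQ hq) (diffat hU sQ hq) ((0:ℝ),(1:ℝ))
    rw [d, dP, dQ]; ring
  -- Laplacian of h
  have lap : ∀ p ∈ U, pdu (pdu h) p + pdv (pdv h) p = 4*((pdu P p)^2 + (pdv P p)^2) := by
    intro p hp
    have dxu : pdu (pdu h) p =
        fderiv ℝ (fun q => 2*(P q * pdu P q) + 2*(Q q * pdu Q q)) p (1,0) :=
      D_congr hU hu_eq hp (1,0)
    have dxv : pdv (pdv h) p =
        fderiv ℝ (fun q => 2*(P q * pdv P q) + 2*(Q q * pdv Q q)) p (0,1) :=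
      D_congr hU hv_eq hp (0,1)
    have eu : fderiv ℝ (fun q => 2*(P q * pdu P q) + 2*(Q q * pdu Q q)) p (1,0) =
        2*(P p * pdu (pdu P) p + pdu P p * pdu P p) + 2*(Q p * pdu (pdu Q) p + pdu Q p * pdu Q p) := by
      rw [D_add (((diffat hU sP hp).fun_mul (diffat hU sPu hp)).const_mul 2)
        (((diffat hU sQ hp).fun_mul (diffat hU sQu hp)).const_mul 2),
        D_cmul 2 ((diffat hU sP hp).fun_mul (diffat hU sPu hp)),
        D_cmul 2 ((diffat hU sQ hp).fun_mul (diffat hU sQu hp)),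
        D_mul (diffat hU sP hp) (diffat hU sPu hp),
        D_mul (diffat hU sQ hp) (diffat hU sQu hp)]
      rfl
    have ev : fderiv ℝ (fun q => 2*(P q * pdv P q) + 2*(Q q * pdv Q q)) p (0,1) =
        2*(P p * pdv (pdv P) p + pdv P p * pdv P p) + 2*(Q p * pdv (pdv Q) p + pdv Q p * pdv Q p) := by
      rw [D_add (((diffat hU sP hp).fun_mul (diffat hU sPv hp)).const_mul 2)
        (((diffat hU sQ hp).fun_mul (diffat hU sQv hp)).const_mul 2),
        D_cmul 2 ((diffat hU sP hp).fun_mul (diffat hU sPv hp)),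
        D_cmul 2 ((diffat hU sQ hp).fun_mul (diffat hU sQv hp)),
        D_mul (diffat hU sP hp) (diffat hU sPv hp),
        D_mul (diffat hU sQ hp) (diffat hU sQv hp)]
      rfl
    rw [dxu, dxv, eu, ev]
    have l1 := LP p hp
    have l2 := LQ p hp
    have c1 := cr1 p hp
    have c2 := cr2 p hp
    linear_combination (2*P p)*l1 + (2*Q p)*l2 - (2*(pdv P p + pdu Q p))*c1 +
      (2*(pdv Q p - pdu P p))*c2
  -- the contradiction: h = 0 on U
  have hzero : ∀ p ∈ U, h p = 0 := by
    intro p hp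
    have t9 := hu_eq p hp
    have t10 := hv_eq p hp
    have t11 := Hu p hp
    have t12 := Hv p hp
    have qu : pdu Q p = pdv P p := (cr1 p hp).symm
    have qv : pdv Q p = -(pdu P p) := cr2 p hp
    rw [qu] at t9
    rw [qv] at t10
    have hhp : h p = P p * P p + Q p * Q p := rfl
    -- E^2 * laplacian h = 6 h^2
    have F1 : E p * pdu (pdu h) p + pdu h p * P p = 3*(P p * pdu h p + h p * pdu P p) := by
      have dl : fderiv ℝ (fun q => E q * pdu h q) p ((1:ℝ),(0:ℝ)) =
          E p * pdu (pdu h) p + pdu h p * P p :=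
        D_mul (diffat hU hE hp) (diffat hU shu hp) ((1:ℝ),(0:ℝ))
      have dr : fderiv ℝ (fun q => 3*(P q * h q)) p ((1:ℝ),(0:ℝ)) =
          3*(P p * pdu h p + h p * pdu P p) := by
        rw [D_cmul 3 ((diffat hU sP hp).fun_mul (diffat hU sh hp)),
          D_mul (diffat hU sP hp) (diffat hU sh hp)]
        rfl
      have := D_congr hU Hu hp ((1:ℝ),(0:ℝ))
      rw [dl, dr] at this
      exact this
    have F2 : E p * pdv (pdv h) p + pdv h p * Q p = 3*(Q p * pdv h p + h p * pdv Q p) := by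
      have dl : fderiv ℝ (fun q => E q * pdv h q) p ((0:ℝ),(1:ℝ)) =
          E p * pdv (pdv h) p + pdv h p * Q p :=
        D_mul (diffat hU hE hp) (diffat hU shv hp) ((0:ℝ),(1:ℝ))
      have dr : fderiv ℝ (fun q => 3*(Q q * h q)) p ((0:ℝ),(1:ℝ)) =
          3*(Q p * pdv h p + h p * pdv Q p) := by
        rw [D_cmul 3 ((diffat hU sQ hp).fun_mul (diffat hU sh hp)),
          D_mul (diffat hU sQ hp) (diffat hU sh hp)]
        rfl
      have := D_congr hU Hv hp ((0:ℝ),(1:ℝ))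
      rw [dl, dr] at this
      exact this
    have i1 : E p * (pdu (pdu h) p + pdv (pdv h) p) =
        2*(P p * pdu h p + Q p * pdv h p) := by
      linear_combination F1 + F2 + 3*(h p)*(hharm p hp)
    have i2 : E p^2*(pdu (pdu h) p + pdv (pdv h) p) = 6*(h p)^2 := by
      linear_combination (E p)*i1 + (2*P p)*t11 + (2*Q p)*t12 + (-(6*h p))*hhp
    have C1 : 4*(E p)^2*((pdu P p)^2 + (pdv P p)^2) = 6*(h p)^2 := by
      linear_combination i2 - (E p^2)*(lap p hp)
    have hp3 : 3*(h p)^3 = 0 := by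
      linear_combination (-(E p * pdu h p + 3*P p * h p))*t11 +
        (-(E p * pdv h p + 3*Q p * h p))*t12 +
        (E p^2*(pdu h p + 2*(P p * pdu P p) + 2*(Q p * pdv P p)))*t9 +
        (E p^2*(pdv h p + 2*(P p * pdv P p) - 2*(Q p * pdu P p)))*t10 +
        (P p^2 + Q p^2)*C1 + (3*(h p)^2)*hhp
    have h3 : (h p)^3 = 0 := by linarith
    exact pow_eq_zero_iff (by norm_num : (3:ℕ) ≠ 0) |>.mp h3
  -- P, Q, e vanish
  have Pzero : ∀ p ∈ U, P p = 0 := by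
    intro p hp
    have hz := hzero p hp
    have hhp : h p = P p * P p + Q p * Q p := rfl
    nlinarith [sq_nonneg (P p), sq_nonneg (Q p)]
  have Qzero : ∀ p ∈ U, Q p = 0 := by
    intro p hp
    have hz := hzero p hp
    have hhp : h p = P p * P p + Q p * Q p := rfl
    nlinarith [sq_nonneg (P p), sq_nonneg (Q p)]
  have ezero : ∀ p ∈ U, e p = 0 := by
    intro p hp
    have hG := GaussB p hp
    have hs4 := sval p hp
    have hEp := hEpos p hp
    rw [Pzero p hp, Qzero p hp, hs4] at hG
    have he2 : e p ^ 2 = 0 := by nlinarith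
    exact pow_eq_zero_iff (two_ne_zero) |>.mp he2
  refine ⟨ezero, ?_, ?_⟩
  · intro p hp
    rw [ezero p hp]
    simp
  -- the image lies in a plane
  have Wzero : ∀ p ∈ U, W p = 0 := by
    intro p hp
    rw [decW p hp, ezero p hp]
    simp
  have fuu0 : ∀ p ∈ U, fuu p = 0 := by
    intro p hp
    have d := dec1 p hp
    rw [Pzero p hp, Qzero p hp, Wzero p hp] at d
    simp only [zero_smul, neg_zero, smul_zero, add_zero, zero_add] at d
    rcases smul_eq_zero.mp d with hd | hd
    · have := hEpos p hp; linarith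
    · exact hd
  have fuv0 : ∀ p ∈ U, fuv p = 0 := by
    intro p hp
    have d := dec2 p hp
    rw [Pzero p hp, Qzero p hp] at d
    simp only [zero_smul, add_zero, zero_add] at d
    rcases smul_eq_zero.mp d with hd | hd
    · have := hEpos p hp; linarith
    · exact hd
  have fvv0 : ∀ p ∈ U, fvv p = 0 := by
    intro p hp
    have d := dec3 p hp
    rw [Pzero p hp, Qzero p hp, Wzero p hp] at d
    simp only [zero_smul, neg_zero, smul_zero, add_zero, zero_add] at d
    rcases smul_eq_zero.mp d with hd | hd
    · have := hEpos p hp; linarith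
    · exact hd
  have wsplit : ∀ w : ℝ × ℝ, w = w.1 • ((1:ℝ),(0:ℝ)) + w.2 • ((0:ℝ),(1:ℝ)) := by
    intro w
    simp [Prod.ext_iff]
  have dfu0 : ∀ p ∈ U, fderiv ℝ fu p = 0 := by
    intro p hp
    apply ContinuousLinearMap.ext
    intro w
    rw [show fderiv ℝ fu p w = fderiv ℝ fu p (w.1 • ((1:ℝ),(0:ℝ)) + w.2 • ((0:ℝ),(1:ℝ)))
      from by rw [← wsplit w], map_add, map_smul, map_smul]
    have h1 : fderiv ℝ fu p (1,0) = 0 := fuu0 p hp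
    have h2 : fderiv ℝ fu p (0,1) = 0 := fuv0 p hp
    rw [h1, h2]
    simp
  have dfv0 : ∀ p ∈ U, fderiv ℝ fv p = 0 := by
    intro p hp
    apply ContinuousLinearMap.ext
    intro w
    rw [show fderiv ℝ fv p w = fderiv ℝ fv p (w.1 • ((1:ℝ),(0:ℝ)) + w.2 • ((0:ℝ),(1:ℝ)))
      from by rw [← wsplit w], map_add, map_smul, map_smul]
    have h1 : fderiv ℝ fv p (1,0) = 0 := (hswap p hp).trans (fuv0 p hp)
    have h2 : fderiv ℝ fv p (0,1) = 0 := fvv0 p hp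
    rw [h1, h2]
    simp
  obtain ⟨q₀, hq₀⟩ := hUc.nonempty
  have hVu : ∀ q ∈ U, fu q = fu q₀ := fun q hq =>
    eq_of_fderiv_zero hU hUc.isPreconnected (fun x hx => diffat hU sfu hx) dfu0 hq hq₀
  have hVv : ∀ q ∈ U, fv q = fv q₀ := fun q hq =>
    eq_of_fderiv_zero hU hUc.isPreconnected (fun x hx => diffat hU sfv hx) dfv0 hq hq₀
  classical
  set K : Submodule ℝ E3 := Submodule.span ℝ ({fu q₀, fv q₀} : Set E3) with hK_def
  have hKne : Kᗮ ≠ ⊥ := by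
    intro hbot
    have hKtop : K = ⊤ := by rwa [Submodule.orthogonal_eq_bot_iff] at hbot
    have h3 : Module.finrank ℝ K = 3 := by
      rw [hKtop, finrank_top, finrank_euclideanSpace, Fintype.card_fin]
    have hle : Module.finrank ℝ K ≤ 2 := by
      refine le_trans (finrank_span_le_card _) ?_
      rw [Set.toFinset_insert, Set.toFinset_singleton]
      exact le_trans (Finset.card_insert_le _ _) (by simp)
    omega
  obtain ⟨n, hnK, hn0⟩ := Submodule.ne_bot_iff _ |>.mp hKne
  refine ⟨f q₀, n, hn0, ?_⟩
  intro q hq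
  have hperp : ∀ u ∈ K, ⟪u, n⟫ = 0 := (Submodule.mem_orthogonal K n).mp hnK
  have hfu_n : ⟪fu q₀, n⟫ = 0 := hperp _ (Submodule.subset_span (by simp))
  have hfv_n : ⟪fv q₀, n⟫ = 0 := hperp _ (Submodule.subset_span (by simp))
  have gdiff : ∀ z ∈ U, DifferentiableAt ℝ (fun z' => ⟪f z' - f q₀, n⟫) z := fun z hz =>
    ((diffat hU hf hz).sub_const _).inner ℝ (differentiableAt_const n)
  have gz : ∀ z ∈ U, fderiv ℝ (fun z' => ⟪f z' - f q₀, n⟫) z = 0 := by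
    intro z hz
    apply ContinuousLinearMap.ext
    intro w
    rw [fderiv_inner_apply ℝ ((diffat hU hf hz).sub_const _) (differentiableAt_const n) w]
    have hc : fderiv ℝ (fun _ : ℝ × ℝ => n) z = 0 := fderiv_const_apply n
    have hsub : fderiv ℝ (fun z' => f z' - f q₀) z = fderiv ℝ f z := fderiv_sub_const _
    rw [hc, hsub]
    have hfw : fderiv ℝ f z w = w.1 • fu q₀ + w.2 • fv q₀ := by
      rw [show fderiv ℝ f z w = fderiv ℝ f z (w.1 • ((1:ℝ),(0:ℝ)) + w.2 • ((0:ℝ),(1:ℝ)))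
        from by rw [← wsplit w], map_add, map_smul, map_smul]
      have h1 : fderiv ℝ f z (1,0) = fu q₀ := hVu z hz
      have h2 : fderiv ℝ f z (0,1) = fv q₀ := hVv z hz
      rw [h1, h2]
    rw [hfw]
    simp only [inner_add_left, real_inner_smul_left, inner_zero_right, hfu_n, hfv_n]
    simp
  have := eq_of_fderiv_zero hU hUc.isPreconnected gdiff gz hq hq₀
  rw [this, sub_self, inner_zero_left]
end helpers2
end

section
/- There is no smooth isometric immersion of any open subset of the round 2-sphere into ℝ³ whose induced first fundamental form in some coordinate chart has the form E·δ_ij with E strictly positive and harmonic, i.e., the round sphere admits no local parametrization by a Liouville metric of the form h(x,y)(dx²+dy²) with h harmonic. -/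
open RealInnerProductSpace

section helpers

variable {F : Type*} [NormedAddCommGroup F] [NormedSpace ℝ F]

lemma cd_pd {g : ℝ × ℝ → F} {p : ℝ × ℝ} (hg : ContDiffAt ℝ (⊤ : ℕ∞) g p) (v : ℝ × ℝ) :
    ContDiffAt ℝ (⊤ : ℕ∞) (fun q => fderiv ℝ g q v) p :=
  (hg.fderiv_right (by simp)).clm_apply contDiffAt_const

lemma pd_congr_s11 {U : Set (ℝ × ℝ)} (hU : IsOpen U) {a b : ℝ × ℝ → F}
    (hab : ∀ q ∈ U, a q = b q) {p : ℝ × ℝ} (hp : p ∈ U) :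
    fderiv ℝ a p = fderiv ℝ b p :=
  Filter.EventuallyEq.fderiv_eq (by filter_upwards [hU.mem_nhds hp] using hab)

lemma pd_symm {g : ℝ × ℝ → F} {U : Set (ℝ × ℝ)} (hU : IsOpen U)
    (hg : ∀ q ∈ U, ContDiffAt ℝ (⊤ : ℕ∞) g q) {p : ℝ × ℝ} (hp : p ∈ U) (v w : ℝ × ℝ) :
    fderiv ℝ (fun q => fderiv ℝ g q v) p w = fderiv ℝ (fun q => fderiv ℝ g q w) p v := by
  have hdiff : ∀ᶠ y in nhds p, HasFDerivAt g (fderiv ℝ g y) y := by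
    filter_upwards [hU.mem_nhds hp] with q hq
    exact ((hg q hq).differentiableAt (by simp)).hasFDerivAt
  have h2 : DifferentiableAt ℝ (fderiv ℝ g) p :=
    ((hg p hp).fderiv_right (m := 1) (by exact WithTop.coe_le_coe.mpr le_top)).differentiableAt one_ne_zero
  have hsymm := second_derivative_symmetric_of_eventually hdiff h2.hasFDerivAt v w
  have key : ∀ u : ℝ × ℝ, fderiv ℝ (fun q => fderiv ℝ g q u) p
      = (fderiv ℝ (fderiv ℝ g) p).flip u := by
    intro u
    rw [fderiv_clm_apply h2 (differentiableAt_const u)]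
    simp
  rw [key v, key w]
  simpa using hsymm.symm

lemma pd_inner_eq {U : Set (ℝ × ℝ)} (hU : IsOpen U) {a b : ℝ × ℝ → E3} {g : ℝ × ℝ → ℝ}
    (hab : ∀ q ∈ U, ⟪a q, b q⟫ = g q) {p : ℝ × ℝ} (hp : p ∈ U)
    (ha : DifferentiableAt ℝ a p) (hb : DifferentiableAt ℝ b p) (w : ℝ × ℝ) :
    ⟪a p, fderiv ℝ b p w⟫ + ⟪fderiv ℝ a p w, b p⟫ = fderiv ℝ g p w := by
  rw [← fderiv_inner_apply ℝ ha hb w]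
  have h : fderiv ℝ (fun t => ⟪a t, b t⟫) p = fderiv ℝ g p :=
    Filter.EventuallyEq.fderiv_eq (by filter_upwards [hU.mem_nhds hp] using hab)
  rw [h]

lemma pdw_mul {a b : ℝ × ℝ → ℝ} {p : ℝ × ℝ} (ha : DifferentiableAt ℝ a p)
    (hb : DifferentiableAt ℝ b p) (w : ℝ × ℝ) :
    fderiv ℝ (fun q => a q * b q) p w = fderiv ℝ a p w * b p + a p * fderiv ℝ b p w := by
  rw [fderiv_fun_mul ha hb]
  simp
  ring

lemma pdw_add {a b : ℝ × ℝ → ℝ} {p : ℝ × ℝ} (ha : DifferentiableAt ℝ a p)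
    (hb : DifferentiableAt ℝ b p) (w : ℝ × ℝ) :
    fderiv ℝ (fun q => a q + b q) p w = fderiv ℝ a p w + fderiv ℝ b p w := by
  rw [fderiv_fun_add ha hb]
  simp

lemma pdw_sub {a b : ℝ × ℝ → ℝ} {p : ℝ × ℝ} (ha : DifferentiableAt ℝ a p)
    (hb : DifferentiableAt ℝ b p) (w : ℝ × ℝ) :
    fderiv ℝ (fun q => a q - b q) p w = fderiv ℝ a p w - fderiv ℝ b p w := by
  rw [fderiv_fun_sub ha hb]
  simp

lemma pdw_const_mul {a : ℝ × ℝ → ℝ} {p : ℝ × ℝ} (c : ℝ) (ha : DifferentiableAt ℝ a p)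
    (w : ℝ × ℝ) :
    fderiv ℝ (fun q => c * a q) p w = c * fderiv ℝ a p w := by
  rw [fderiv_const_mul ha c]
  simp

end helpers
lemma parseval3 {a b n X Y : E3} {e r : ℝ} (he : 0 < e) (hr : 0 < r)
    (haa : ⟪a, a⟫ = e) (hbb : ⟪b, b⟫ = e) (hnn : ⟪n, n⟫ = r ^ 2)
    (hab : ⟪a, b⟫ = 0) (han : ⟪a, n⟫ = 0) (hbn : ⟪b, n⟫ = 0) :
    ⟪X, Y⟫ = ⟪X, a⟫ * ⟪a, Y⟫ / e + ⟪X, b⟫ * ⟪b, Y⟫ / e + ⟪X, n⟫ * ⟪n, Y⟫ / r ^ 2 := by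
  have hse : (0:ℝ) < Real.sqrt e := Real.sqrt_pos.mpr he
  have hsq : Real.sqrt e * Real.sqrt e = e := Real.mul_self_sqrt he.le
  have hinv : (Real.sqrt e)⁻¹ * (Real.sqrt e)⁻¹ = e⁻¹ := by rw [← mul_inv, hsq]
  have hinvr : r⁻¹ * r⁻¹ = (r ^ 2)⁻¹ := by rw [← mul_inv]; ring_nf
  have hba : ⟪b, a⟫ = 0 := by rw [real_inner_comm]; exact hab
  have hna : ⟪n, a⟫ = 0 := by rw [real_inner_comm]; exact han
  have hnb : ⟪n, b⟫ = 0 := by rw [real_inner_comm]; exact hbn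
  set v : Fin 3 → E3 := ![(Real.sqrt e)⁻¹ • a, (Real.sqrt e)⁻¹ • b, r⁻¹ • n] with hv
  have hv0 : v 0 = (Real.sqrt e)⁻¹ • a := rfl
  have hv1 : v 1 = (Real.sqrt e)⁻¹ • b := rfl
  have hv2 : v 2 = r⁻¹ • n := rfl
  have h00 : ⟪v 0, v 0⟫ = 1 := by
    rw [hv0, real_inner_smul_left, real_inner_smul_right, haa]; field_simp; rw [Real.sq_sqrt he.le]
  have h11 : ⟪v 1, v 1⟫ = 1 := by
    rw [hv1, real_inner_smul_left, real_inner_smul_right, hbb]; field_simp; rw [Real.sq_sqrt he.le]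
  have h22 : ⟪v 2, v 2⟫ = 1 := by
    rw [hv2, real_inner_smul_left, real_inner_smul_right, hnn]; field_simp
  have h01 : ⟪v 0, v 1⟫ = 0 := by
    rw [hv0, hv1, real_inner_smul_left, real_inner_smul_right, hab]; ring
  have h02 : ⟪v 0, v 2⟫ = 0 := by
    rw [hv0, hv2, real_inner_smul_left, real_inner_smul_right, han]; ring
  have h12 : ⟪v 1, v 2⟫ = 0 := by
    rw [hv1, hv2, real_inner_smul_left, real_inner_smul_right, hbn]; ring
  have h10 : ⟪v 1, v 0⟫ = 0 := by
    rw [hv0, hv1, real_inner_smul_left, real_inner_smul_right, hba]; ring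
  have h20 : ⟪v 2, v 0⟫ = 0 := by
    rw [hv0, hv2, real_inner_smul_left, real_inner_smul_right, hna]; ring
  have h21 : ⟪v 2, v 1⟫ = 0 := by
    rw [hv1, hv2, real_inner_smul_left, real_inner_smul_right, hnb]; ring
  have hon : Orthonormal ℝ v := by
    rw [orthonormal_iff_ite]
    intro i j
    fin_cases i <;> fin_cases j
    · rw [if_pos rfl]; exact h00
    · rw [if_neg (by decide)]; exact h01
    · rw [if_neg (by decide)]; exact h02
    · rw [if_neg (by decide)]; exact h10
    · rw [if_pos rfl]; exact h11
    · rw [if_neg (by decide)]; exact h12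
    · rw [if_neg (by decide)]; exact h20
    · rw [if_neg (by decide)]; exact h21
    · rw [if_pos rfl]; exact h22
  have hcard : Fintype.card (Fin 3) = Module.finrank ℝ E3 := by simp
  have hsp : ⊤ ≤ Submodule.span ℝ (Set.range v) :=
    (hon.linearIndependent.span_eq_top_of_card_eq_finrank hcard).ge
  let B : OrthonormalBasis (Fin 3) ℝ E3 := OrthonormalBasis.mk hon hsp
  have hB := B.sum_inner_mul_inner X Y
  rw [Fin.sum_univ_three] at hB
  have hc0 : B 0 = v 0 := by simp [B]
  have hc1 : B 1 = v 1 := by simp [B]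
  have hc2 : B 2 = v 2 := by simp [B]
  rw [← hB, hc0, hc1, hc2, hv0, hv1, hv2]
  simp only [real_inner_smul_left, real_inner_smul_right]
  rw [div_eq_mul_inv, div_eq_mul_inv, div_eq_mul_inv]
  linear_combination (⟪X, a⟫ * ⟪a, Y⟫) * hinv + (⟪X, b⟫ * ⟪b, Y⟫) * hinv +
    (⟪X, n⟫ * ⟪n, Y⟫) * hinvr
lemma scalar_contradiction {U : Set (ℝ × ℝ)} (hU : IsOpen U) {E : ℝ × ℝ → ℝ} {R : ℝ}
    (hE : ∀ p ∈ U, ContDiffAt ℝ (⊤ : ℕ∞) E p) (hEpos : ∀ p ∈ U, 0 < E p) (hR : 0 < R)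
    (hharm : ∀ p ∈ U, fderiv ℝ (fun q => fderiv ℝ E q ((1:ℝ), (0:ℝ))) p ((1:ℝ), (0:ℝ))
      + fderiv ℝ (fun q => fderiv ℝ E q ((0:ℝ), (1:ℝ))) p ((0:ℝ), (1:ℝ)) = 0)
    (hG : ∀ q ∈ U, R ^ 2 * (fderiv ℝ E q ((1:ℝ), (0:ℝ)) * fderiv ℝ E q ((1:ℝ), (0:ℝ))
        + fderiv ℝ E q ((0:ℝ), (1:ℝ)) * fderiv ℝ E q ((0:ℝ), (1:ℝ)))
      = 2 * (E q * (E q * E q)))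
    {p₀ : ℝ × ℝ} (hp₀ : p₀ ∈ U) : False := by
  set P : ℝ × ℝ → ℝ := fun q => fderiv ℝ E q ((1:ℝ), (0:ℝ)) with hPdef
  set Q : ℝ × ℝ → ℝ := fun q => fderiv ℝ E q ((0:ℝ), (1:ℝ)) with hQdef
  have hbr1 : ∀ p, fderiv ℝ E p ((1:ℝ), (0:ℝ)) = P p := fun _ => rfl
  have hbr2 : ∀ p, fderiv ℝ E p ((0:ℝ), (1:ℝ)) = Q p := fun _ => rfl
  have dE : ∀ p ∈ U, DifferentiableAt ℝ E p := fun p hp => (hE p hp).differentiableAt (by simp)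
  have cP : ∀ p ∈ U, ContDiffAt ℝ (⊤ : ℕ∞) P p := fun p hp => cd_pd (hE p hp) _
  have cQ : ∀ p ∈ U, ContDiffAt ℝ (⊤ : ℕ∞) Q p := fun p hp => cd_pd (hE p hp) _
  have dP : ∀ p ∈ U, DifferentiableAt ℝ P p := fun p hp => (cP p hp).differentiableAt (by simp)
  have dQ : ∀ p ∈ U, DifferentiableAt ℝ Q p := fun p hp => (cQ p hp).differentiableAt (by simp)
  have dPu : ∀ p ∈ U, DifferentiableAt ℝ (fun q => fderiv ℝ P q ((1:ℝ), (0:ℝ))) p :=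
    fun p hp => (cd_pd (cP p hp) _).differentiableAt (by simp)
  have dPv : ∀ p ∈ U, DifferentiableAt ℝ (fun q => fderiv ℝ P q ((0:ℝ), (1:ℝ))) p :=
    fun p hp => (cd_pd (cP p hp) _).differentiableAt (by simp)
  -- symmetry of mixed partials : Q_u = P_v
  have hS : ∀ p ∈ U, fderiv ℝ Q p ((1:ℝ), (0:ℝ)) = fderiv ℝ P p ((0:ℝ), (1:ℝ)) :=
    fun p hp => pd_symm hU hE hp ((0:ℝ), (1:ℝ)) ((1:ℝ), (0:ℝ))
  -- Q_v = -P_u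
  have hQv : ∀ p ∈ U, fderiv ℝ Q p ((0:ℝ), (1:ℝ)) = -fderiv ℝ P p ((1:ℝ), (0:ℝ)) :=
    fun p hp => by linarith [hharm p hp]
  -- derivative of hG in direction (1,0)
  have hD1 : ∀ p ∈ U, R ^ 2 * (2 * (P p * fderiv ℝ P p ((1:ℝ), (0:ℝ)))
      + 2 * (Q p * fderiv ℝ P p ((0:ℝ), (1:ℝ)))) = 6 * (E p * E p) * P p := by
    intro p hp
    have h0 : fderiv ℝ (fun q => R ^ 2 * (P q * P q + Q q * Q q)) p ((1:ℝ), (0:ℝ))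
        = fderiv ℝ (fun q => 2 * (E q * (E q * E q))) p ((1:ℝ), (0:ℝ)) := by
      rw [pd_congr_s11 hU hG hp]
    rw [pdw_const_mul (R ^ 2) (((dP p hp).fun_mul (dP p hp)).fun_add ((dQ p hp).fun_mul (dQ p hp))) _,
      pdw_add ((dP p hp).fun_mul (dP p hp)) ((dQ p hp).fun_mul (dQ p hp)) _,
      pdw_mul (dP p hp) (dP p hp) _, pdw_mul (dQ p hp) (dQ p hp) _,
      pdw_const_mul 2 ((dE p hp).fun_mul ((dE p hp).fun_mul (dE p hp))) _,
      pdw_mul (dE p hp) ((dE p hp).fun_mul (dE p hp)) _, pdw_mul (dE p hp) (dE p hp) _] at h0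
    rw [hbr1 p, hS p hp] at h0
    linear_combination h0
  -- derivative of hG in direction (0,1)
  have hD2 : ∀ p ∈ U, R ^ 2 * (2 * (P p * fderiv ℝ P p ((0:ℝ), (1:ℝ)))
      - 2 * (Q p * fderiv ℝ P p ((1:ℝ), (0:ℝ)))) = 6 * (E p * E p) * Q p := by
    intro p hp
    have h0 : fderiv ℝ (fun q => R ^ 2 * (P q * P q + Q q * Q q)) p ((0:ℝ), (1:ℝ))
        = fderiv ℝ (fun q => 2 * (E q * (E q * E q))) p ((0:ℝ), (1:ℝ)) := by
      rw [pd_congr_s11 hU hG hp]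
    rw [pdw_const_mul (R ^ 2) (((dP p hp).fun_mul (dP p hp)).fun_add ((dQ p hp).fun_mul (dQ p hp))) _,
      pdw_add ((dP p hp).fun_mul (dP p hp)) ((dQ p hp).fun_mul (dQ p hp)) _,
      pdw_mul (dP p hp) (dP p hp) _, pdw_mul (dQ p hp) (dQ p hp) _,
      pdw_const_mul 2 ((dE p hp).fun_mul ((dE p hp).fun_mul (dE p hp))) _,
      pdw_mul (dE p hp) ((dE p hp).fun_mul (dE p hp)) _, pdw_mul (dE p hp) (dE p hp) _] at h0
    rw [hbr2 p, hQv p hp] at h0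
    linear_combination h0
  -- solved forms
  have hI1 : ∀ q ∈ U, 2 * (E q * fderiv ℝ P q ((1:ℝ), (0:ℝ))) = 3 * (P q * P q - Q q * Q q) := by
    intro q hq
    have hEne : E q * E q ≠ 0 := mul_ne_zero (hEpos q hq).ne' (hEpos q hq).ne'
    have key : (E q * E q) * (2 * (E q * fderiv ℝ P q ((1:ℝ), (0:ℝ))))
        = (E q * E q) * (3 * (P q * P q - Q q * Q q)) := by
      linear_combination (P q / 2) * hD1 q hq - (Q q / 2) * hD2 q hq
        - fderiv ℝ P q ((1:ℝ), (0:ℝ)) * hG q hq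
    exact mul_left_cancel₀ hEne key
  have hI2 : ∀ q ∈ U, E q * fderiv ℝ P q ((0:ℝ), (1:ℝ)) = 3 * (P q * Q q) := by
    intro q hq
    have hEne : E q * E q ≠ 0 := mul_ne_zero (hEpos q hq).ne' (hEpos q hq).ne'
    have key : (E q * E q) * (E q * fderiv ℝ P q ((0:ℝ), (1:ℝ)))
        = (E q * E q) * (3 * (P q * Q q)) := by
      linear_combination (Q q / 4) * hD1 q hq + (P q / 4) * hD2 q hq
        - (fderiv ℝ P q ((0:ℝ), (1:ℝ)) / 2) * hG q hq
    exact mul_left_cancel₀ hEne key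
  -- second derivatives of the solved forms
  have h3 : ∀ p ∈ U, 2 * (P p * fderiv ℝ P p ((1:ℝ), (0:ℝ))
      + E p * fderiv ℝ (fun q => fderiv ℝ P q ((1:ℝ), (0:ℝ))) p ((1:ℝ), (0:ℝ)))
      = 3 * (2 * (P p * fderiv ℝ P p ((1:ℝ), (0:ℝ)))
        - 2 * (Q p * fderiv ℝ P p ((0:ℝ), (1:ℝ)))) := by
    intro p hp
    have h0 : fderiv ℝ (fun q => 2 * (E q * fderiv ℝ P q ((1:ℝ), (0:ℝ)))) p ((1:ℝ), (0:ℝ))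
        = fderiv ℝ (fun q => 3 * (P q * P q - Q q * Q q)) p ((1:ℝ), (0:ℝ)) := by
      rw [pd_congr_s11 hU hI1 hp]
    rw [pdw_const_mul 2 ((dE p hp).fun_mul (dPu p hp)) _,
      pdw_mul (dE p hp) (dPu p hp) _,
      pdw_const_mul 3 (((dP p hp).fun_mul (dP p hp)).fun_sub ((dQ p hp).fun_mul (dQ p hp))) _,
      pdw_sub ((dP p hp).fun_mul (dP p hp)) ((dQ p hp).fun_mul (dQ p hp)) _,
      pdw_mul (dP p hp) (dP p hp) _, pdw_mul (dQ p hp) (dQ p hp) _] at h0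
    rw [hbr1 p, hS p hp] at h0
    linear_combination h0
  have h4 : ∀ p ∈ U, Q p * fderiv ℝ P p ((0:ℝ), (1:ℝ))
      + E p * fderiv ℝ (fun q => fderiv ℝ P q ((0:ℝ), (1:ℝ))) p ((0:ℝ), (1:ℝ))
      = 3 * (Q p * fderiv ℝ P p ((0:ℝ), (1:ℝ)) - P p * fderiv ℝ P p ((1:ℝ), (0:ℝ))) := by
    intro p hp
    have h0 : fderiv ℝ (fun q => E q * fderiv ℝ P q ((0:ℝ), (1:ℝ))) p ((0:ℝ), (1:ℝ))
        = fderiv ℝ (fun q => 3 * (P q * Q q)) p ((0:ℝ), (1:ℝ)) := by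
      rw [pd_congr_s11 hU hI2 hp]
    rw [pdw_mul (dE p hp) (dPv p hp) _,
      pdw_const_mul 3 ((dP p hp).fun_mul (dQ p hp)) _,
      pdw_mul (dP p hp) (dQ p hp) _] at h0
    rw [hbr2 p, hQv p hp] at h0
    linear_combination h0
  -- P is harmonic
  have h5 : ∀ p ∈ U, fderiv ℝ (fun q => fderiv ℝ P q ((1:ℝ), (0:ℝ))) p ((1:ℝ), (0:ℝ))
      + fderiv ℝ (fun q => fderiv ℝ P q ((0:ℝ), (1:ℝ))) p ((0:ℝ), (1:ℝ)) = 0 := by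
    intro p hp
    have e1 : fderiv ℝ (fun q => fderiv ℝ P q ((0:ℝ), (1:ℝ))) p
        = fderiv ℝ (fun q => fderiv ℝ Q q ((1:ℝ), (0:ℝ))) p :=
      pd_congr_s11 hU (fun q hq => (hS q hq).symm) hp
    have e2 : fderiv ℝ (fun q => fderiv ℝ Q q ((1:ℝ), (0:ℝ))) p ((0:ℝ), (1:ℝ))
        = fderiv ℝ (fun q => fderiv ℝ Q q ((0:ℝ), (1:ℝ))) p ((1:ℝ), (0:ℝ)) :=
      pd_symm hU cQ hp _ _
    have e3 : fderiv ℝ (fun q => fderiv ℝ Q q ((0:ℝ), (1:ℝ))) p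
        = fderiv ℝ (fun q => -fderiv ℝ P q ((1:ℝ), (0:ℝ))) p :=
      pd_congr_s11 hU (fun q hq => hQv q hq) hp
    have e4 : fderiv ℝ (fun q => -fderiv ℝ P q ((1:ℝ), (0:ℝ))) p ((1:ℝ), (0:ℝ))
        = -fderiv ℝ (fun q => fderiv ℝ P q ((1:ℝ), (0:ℝ))) p ((1:ℝ), (0:ℝ)) := by
      rw [fderiv_fun_neg]
      simp
    rw [e1, e2, e3, e4]
    ring
  -- conclude P = 0 on U
  have hP0 : ∀ p ∈ U, P p = 0 := by
    intro p hp
    have h5e : E p * (fderiv ℝ (fun q => fderiv ℝ P q ((1:ℝ), (0:ℝ))) p ((1:ℝ), (0:ℝ))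
        + fderiv ℝ (fun q => fderiv ℝ P q ((0:ℝ), (1:ℝ))) p ((0:ℝ), (1:ℝ))) = E p * 0 :=
      congrArg (fun t => E p * t) (h5 p hp)
    have key : 6 * (E p * E p) * P p = 0 := by
      linear_combination (-(1:ℝ)) * hD1 p hp + R ^ 2 * h3 p hp + 2 * R ^ 2 * h4 p hp
        - 2 * R ^ 2 * h5e
    have hEp := hEpos p hp
    have h6 : (6 : ℝ) * (E p * E p) ≠ 0 := by positivity
    rcases mul_eq_zero.mp key with h | h
    · exact absurd h h6
    · exact h
  -- then fderiv P = 0 on U, so Q = 0, so E = 0 : contradiction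
  have hPu0 : fderiv ℝ P p₀ = 0 := by
    have := pd_congr_s11 hU (fun q hq => hP0 q hq) hp₀ (b := fun _ => (0:ℝ))
    rw [this, fderiv_fun_const]
    rfl
  have hQ0 : Q p₀ = 0 := by
    have h1 := hI1 p₀ hp₀
    rw [hPu0, hP0 p₀ hp₀] at h1
    simp only [ContinuousLinearMap.zero_apply, mul_zero, zero_mul] at h1
    nlinarith [h1]
  have hg := hG p₀ hp₀
  rw [hbr1 p₀, hbr2 p₀, hP0 p₀ hp₀, hQ0] at hg
  have hz : 2 * (E p₀ * (E p₀ * E p₀)) = 0 := by linear_combination -hg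
  have hEp := hEpos p₀ hp₀
  have hpos : (0:ℝ) < 2 * (E p₀ * (E p₀ * E p₀)) := by positivity
  linarith
theorem stmt_11 :
    ¬ ∃ (U : Set (ℝ × ℝ)) (f : ℝ × ℝ → E3) (E : ℝ × ℝ → ℝ)
        (center : E3) (R : ℝ),
      IsOpen U ∧ IsConnected U ∧
      ContDiffOn ℝ (⊤ : ℕ∞) f U ∧ ContDiffOn ℝ (⊤ : ℕ∞) E U ∧
      (∀ p ∈ U, 0 < E p) ∧
      (∀ p ∈ U, pdu (pdu E) p + pdv (pdv E) p = 0) ∧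
      (∀ p ∈ U, ⟪pduV f p, pduV f p⟫ = E p) ∧
      (∀ p ∈ U, ⟪pdvV f p, pdvV f p⟫ = E p) ∧
      (∀ p ∈ U, ⟪pduV f p, pdvV f p⟫ = 0) ∧
      0 < R ∧
      (∀ p ∈ U, ‖f p - center‖ = R) := by
  rintro ⟨U, f, E, center, R, hU, hUconn, hf, hE, hEpos, hharm, hm1, hm2, hm3, hR, hsph⟩
  obtain ⟨p₀, hp₀⟩ := hUconn.nonempty
  -- bridging rfl lemmas
  have b1 : ∀ p : ℝ × ℝ, fderiv ℝ (pduV f) p ((1:ℝ), (0:ℝ)) = pduV (pduV f) p := fun _ => rfl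
  have b2 : ∀ p : ℝ × ℝ, fderiv ℝ (pduV f) p ((0:ℝ), (1:ℝ)) = pdvV (pduV f) p := fun _ => rfl
  have b3 : ∀ p : ℝ × ℝ, fderiv ℝ (pdvV f) p ((1:ℝ), (0:ℝ)) = pduV (pdvV f) p := fun _ => rfl
  have b4 : ∀ p : ℝ × ℝ, fderiv ℝ (pdvV f) p ((0:ℝ), (1:ℝ)) = pdvV (pdvV f) p := fun _ => rfl
  have b5 : ∀ p : ℝ × ℝ, fderiv ℝ f p ((1:ℝ), (0:ℝ)) = pduV f p := fun _ => rfl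
  have b6 : ∀ p : ℝ × ℝ, fderiv ℝ f p ((0:ℝ), (1:ℝ)) = pdvV f p := fun _ => rfl
  have b7 : ∀ p : ℝ × ℝ, fderiv ℝ E p ((1:ℝ), (0:ℝ)) = pdu E p := fun _ => rfl
  have b8 : ∀ p : ℝ × ℝ, fderiv ℝ E p ((0:ℝ), (1:ℝ)) = pdv E p := fun _ => rfl
  have b9 : ∀ p : ℝ × ℝ, fderiv ℝ (pdvV (pduV f)) p ((1:ℝ), (0:ℝ))
      = pduV (pdvV (pduV f)) p := fun _ => rfl
  have b10 : ∀ p : ℝ × ℝ, fderiv ℝ (pduV (pduV f)) p ((0:ℝ), (1:ℝ))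
      = pdvV (pduV (pduV f)) p := fun _ => rfl
  have b11 : ∀ p : ℝ × ℝ, fderiv ℝ (pdu E) p ((1:ℝ), (0:ℝ)) = pdu (pdu E) p := fun _ => rfl
  have b14 : ∀ p : ℝ × ℝ, fderiv ℝ (pdv E) p ((0:ℝ), (1:ℝ)) = pdv (pdv E) p := fun _ => rfl
  -- smoothness
  have hfc : ∀ p ∈ U, ContDiffAt ℝ (⊤ : ℕ∞) f p := fun p hp => hf.contDiffAt (hU.mem_nhds hp)
  have hEc : ∀ p ∈ U, ContDiffAt ℝ (⊤ : ℕ∞) E p := fun p hp => hE.contDiffAt (hU.mem_nhds hp)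
  have cfu : ∀ p ∈ U, ContDiffAt ℝ (⊤ : ℕ∞) (pduV f) p := fun p hp => cd_pd (hfc p hp) _
  have cfv : ∀ p ∈ U, ContDiffAt ℝ (⊤ : ℕ∞) (pdvV f) p := fun p hp => cd_pd (hfc p hp) _
  -- differentiability
  have dfu : ∀ p ∈ U, DifferentiableAt ℝ (pduV f) p :=
    fun p hp => (cfu p hp).differentiableAt (by simp)
  have dfv : ∀ p ∈ U, DifferentiableAt ℝ (pdvV f) p :=
    fun p hp => (cfv p hp).differentiableAt (by simp)
  have dfuu : ∀ p ∈ U, DifferentiableAt ℝ (pduV (pduV f)) p :=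
    fun p hp => (cd_pd (cfu p hp) ((1:ℝ), (0:ℝ))).differentiableAt (by simp)
  have dfuv : ∀ p ∈ U, DifferentiableAt ℝ (pdvV (pduV f)) p :=
    fun p hp => (cd_pd (cfu p hp) ((0:ℝ), (1:ℝ))).differentiableAt (by simp)
  have dP : ∀ p ∈ U, DifferentiableAt ℝ (pdu E) p :=
    fun p hp => (cd_pd (hEc p hp) ((1:ℝ), (0:ℝ))).differentiableAt (by simp)
  have dQ : ∀ p ∈ U, DifferentiableAt ℝ (pdv E) p :=
    fun p hp => (cd_pd (hEc p hp) ((0:ℝ), (1:ℝ))).differentiableAt (by simp)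
  have dF : ∀ p ∈ U, DifferentiableAt ℝ (fun q => f q - center) p :=
    fun p hp => ((hfc p hp).differentiableAt (by simp)).sub_const center
  have bF : ∀ p : ℝ × ℝ, fderiv ℝ (fun q => f q - center) p = fderiv ℝ f p :=
    fun p => fderiv_sub_const center
  -- symmetry of second derivatives of f
  have hsymf : ∀ p ∈ U, pduV (pdvV f) p = pdvV (pduV f) p :=
    fun p hp => pd_symm hU hfc hp _ _
  -- sphere identities
  have hs0 : ∀ q ∈ U, ⟪f q - center, f q - center⟫ = R ^ 2 := by
    intro q hq
    rw [real_inner_self_eq_norm_sq, hsph q hq]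
  have hn1 : ∀ p ∈ U, ⟪pduV f p, f p - center⟫ = 0 := by
    intro p hp
    have h := pd_inner_eq hU hs0 hp (dF p hp) (dF p hp) ((1:ℝ), (0:ℝ))
    rw [bF p, b5 p] at h
    simp only [fderiv_const_apply, ContinuousLinearMap.zero_apply] at h
    have hcm := real_inner_comm (f p - center) (pduV f p)
    linarith
  have hn2 : ∀ p ∈ U, ⟪pdvV f p, f p - center⟫ = 0 := by
    intro p hp
    have h := pd_inner_eq hU hs0 hp (dF p hp) (dF p hp) ((0:ℝ), (1:ℝ))
    rw [bF p, b6 p] at h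
    simp only [fderiv_const_apply, ContinuousLinearMap.zero_apply] at h
    have hcm := real_inner_comm (f p - center) (pdvV f p)
    linarith
  have hn3 : ∀ p ∈ U, ⟪pduV (pduV f) p, f p - center⟫ = -E p := by
    intro p hp
    have h := pd_inner_eq hU hn1 hp (dfu p hp) (dF p hp) ((1:ℝ), (0:ℝ))
    rw [bF p, b5 p, b1 p, hm1 p hp] at h
    simp only [fderiv_const_apply, ContinuousLinearMap.zero_apply] at h
    linarith
  have hn4 : ∀ p ∈ U, ⟪pdvV (pduV f) p, f p - center⟫ = 0 := by
    intro p hp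
    have h := pd_inner_eq hU hn1 hp (dfu p hp) (dF p hp) ((0:ℝ), (1:ℝ))
    rw [bF p, b6 p, b2 p, hm3 p hp] at h
    simp only [fderiv_const_apply, ContinuousLinearMap.zero_apply] at h
    linarith
  have hn5 : ∀ p ∈ U, ⟪pdvV (pdvV f) p, f p - center⟫ = -E p := by
    intro p hp
    have h := pd_inner_eq hU hn2 hp (dfv p hp) (dF p hp) ((0:ℝ), (1:ℝ))
    rw [bF p, b6 p, b4 p, hm2 p hp] at h
    simp only [fderiv_const_apply, ContinuousLinearMap.zero_apply] at h
    linarith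
  -- metric derivative identities
  have vuu_u : ∀ p ∈ U, ⟪pduV (pduV f) p, pduV f p⟫ = (1/2) * pdu E p := by
    intro p hp
    have h := pd_inner_eq hU hm1 hp (dfu p hp) (dfu p hp) ((1:ℝ), (0:ℝ))
    rw [b1 p, b7 p] at h
    have hcm := real_inner_comm (pduV f p) (pduV (pduV f) p)
    linarith
  have vuv_u : ∀ p ∈ U, ⟪pdvV (pduV f) p, pduV f p⟫ = (1/2) * pdv E p := by
    intro p hp
    have h := pd_inner_eq hU hm1 hp (dfu p hp) (dfu p hp) ((0:ℝ), (1:ℝ))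
    rw [b2 p, b8 p] at h
    have hcm := real_inner_comm (pduV f p) (pdvV (pduV f) p)
    linarith
  have vuv_v : ∀ p ∈ U, ⟪pdvV (pduV f) p, pdvV f p⟫ = (1/2) * pdu E p := by
    intro p hp
    have h := pd_inner_eq hU hm2 hp (dfv p hp) (dfv p hp) ((1:ℝ), (0:ℝ))
    rw [b3 p, hsymf p hp, b7 p] at h
    have hcm := real_inner_comm (pdvV f p) (pdvV (pduV f) p)
    linarith
  have vvv_v : ∀ p ∈ U, ⟪pdvV (pdvV f) p, pdvV f p⟫ = (1/2) * pdv E p := by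
    intro p hp
    have h := pd_inner_eq hU hm2 hp (dfv p hp) (dfv p hp) ((0:ℝ), (1:ℝ))
    rw [b4 p, b8 p] at h
    have hcm := real_inner_comm (pdvV f p) (pdvV (pdvV f) p)
    linarith
  have vuu_v : ∀ p ∈ U, ⟪pduV (pduV f) p, pdvV f p⟫ = -(1/2) * pdv E p := by
    intro p hp
    have h := pd_inner_eq hU hm3 hp (dfu p hp) (dfv p hp) ((1:ℝ), (0:ℝ))
    rw [b3 p, hsymf p hp, b1 p] at h
    simp only [fderiv_const_apply, ContinuousLinearMap.zero_apply] at h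
    have hcm := real_inner_comm (pduV f p) (pdvV (pduV f) p)
    linarith [vuv_u p hp]
  have vu_vv : ∀ p ∈ U, ⟪pduV f p, pdvV (pdvV f) p⟫ = -(1/2) * pdu E p := by
    intro p hp
    have h := pd_inner_eq hU hm3 hp (dfu p hp) (dfv p hp) ((0:ℝ), (1:ℝ))
    rw [b4 p, b2 p] at h
    simp only [fderiv_const_apply, ContinuousLinearMap.zero_apply] at h
    linarith [vuv_v p hp]
  -- Gauss equation via third derivatives
  have hG : ∀ q ∈ U, R ^ 2 * (pdu E q * pdu E q + pdv E q * pdv E q)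
      = 2 * (E q * (E q * E q)) := by
    intro p hp
    have hg1 := pd_inner_eq hU vuu_v hp (dfuu p hp) (dfv p hp) ((0:ℝ), (1:ℝ))
    rw [b4 p, b10 p, pdw_const_mul (-(1/2)) (dQ p hp) _, b14 p] at hg1
    have hg2 := pd_inner_eq hU vuv_v hp (dfuv p hp) (dfv p hp) ((1:ℝ), (0:ℝ))
    have hsym3 : pduV (pdvV (pduV f)) p = pdvV (pduV (pduV f)) p :=
      pd_symm hU cfu hp _ _
    rw [b3 p, hsymf p hp, b9 p, hsym3, pdw_const_mul (1/2) (dP p hp) _, b11 p] at hg2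
    -- Parseval expansions
    have hxy := parseval3 (hEpos p hp) hR (hm1 p hp) (hm2 p hp) (hs0 p hp) (hm3 p hp)
      (hn1 p hp) (hn2 p hp) (X := pduV (pduV f) p) (Y := pdvV (pdvV f) p)
    have c1 : ⟪pdvV f p, pdvV (pdvV f) p⟫ = (1/2) * pdv E p := by
      rw [real_inner_comm]; exact vvv_v p hp
    have c2 : ⟪f p - center, pdvV (pdvV f) p⟫ = -E p := by
      rw [real_inner_comm]; exact hn5 p hp
    rw [vuu_u p hp, vu_vv p hp, vuu_v p hp, c1, hn3 p hp, c2] at hxy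
    have hMM := parseval3 (hEpos p hp) hR (hm1 p hp) (hm2 p hp) (hs0 p hp) (hm3 p hp)
      (hn1 p hp) (hn2 p hp) (X := pdvV (pduV f) p) (Y := pdvV (pduV f) p)
    have c3 : ⟪pduV f p, pdvV (pduV f) p⟫ = (1/2) * pdv E p := by
      rw [real_inner_comm]; exact vuv_u p hp
    have c4 : ⟪pdvV f p, pdvV (pduV f) p⟫ = (1/2) * pdu E p := by
      rw [real_inner_comm]; exact vuv_v p hp
    have c5 : ⟪f p - center, pdvV (pduV f) p⟫ = 0 := by
      rw [real_inner_comm]; exact hn4 p hp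
    rw [vuv_u p hp, vuv_v p hp, hn4 p hp, c3, c4, c5] at hMM
    -- combine
    have hsub : ⟪pduV (pduV f) p, pdvV (pdvV f) p⟫
        - ⟪pdvV (pduV f) p, pdvV (pduV f) p⟫ = 0 := by
      linarith [hg1, hg2, hharm p hp]
    rw [hxy, hMM] at hsub
    have hEne : E p ≠ 0 := (hEpos p hp).ne'
    have hRne : R ≠ 0 := hR.ne'
    field_simp at hsub
    have key : (32 * E p ^ 2) * (R ^ 2 * (pdu E p * pdu E p + pdv E p * pdv E p)
        - 2 * (E p * (E p * E p))) = 0 := by linear_combination (-16 * E p ^ 2) * hsub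
    have hEp := hEpos p hp
    have h32 : (32 : ℝ) * E p ^ 2 ≠ 0 := by positivity
    rcases mul_eq_zero.mp key with h | h
    · exact absurd h h32
    · linarith
  -- scalar contradiction
  exact scalar_contradiction hU hEc hEpos hR (fun p hp => hharm p hp)
    (fun q hq => hG q hq) hp₀
end
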